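/- arXiv:2402.04449 — 7 statements merged into one kernel-verified Lean document; each statement's English description precedes it below -/
import Mathlib

section
/- Let G be a discrete Borel groupoid and let A be a Borel subset of the isotropy subgroupoid Iso(G) = {g ∈ G : s(g) = t(g)}. Then the conjugacy class Ω_A = ⋃_{g ∈ G} g·A·g⁻¹ is a Borel subset of G. In fact, if B is any countable collection of Borel bisections covering G, then Ω_A = ⋃_{B ∈ B} B·A·B⁻¹. -/
open MeasureTheory ENNReal

structure DiscreteBorelGroupoid (G : Type*) [MeasurableSpace G] where
  s : G → G
  t : G → G
  mul : G → G → G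
  inv : G → G
  s_s : ∀ g, s (s g) = s g
  t_s : ∀ g, t (s g) = s g
  s_t : ∀ g, s (t g) = t g
  t_t : ∀ g, t (t g) = t g
  mul_s_self : ∀ g, mul g (s g) = g
  t_mul_self : ∀ g, mul (t g) g = g
  s_mul : ∀ {g h}, s g = t h → s (mul g h) = s h
  t_mul : ∀ {g h}, s g = t h → t (mul g h) = t g
  mul_assoc : ∀ {g h k}, s g = t h → s h = t k → mul (mul g h) k = mul g (mul h k)
  s_inv : ∀ g, s (inv g) = t g
  t_inv : ∀ g, t (inv g) = s g
  mul_inv_self : ∀ g, mul g (inv g) = t g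
  inv_mul_self : ∀ g, mul (inv g) g = s g
  measurable_s : Measurable s
  measurable_t : Measurable t
  measurable_inv : Measurable inv
  measurable_mul : Measurable (Function.uncurry mul)
  countable_s_fibers : ∀ x, {g | s g = x}.Countable
  countable_t_fibers : ∀ x, {g | t g = x}.Countable

namespace DiscreteBorelGroupoid

variable {G : Type*} [MeasurableSpace G] (Γ : DiscreteBorelGroupoid G)

def units : Set G := Set.range Γ.s

def IsBisection (A : Set G) : Prop := Set.InjOn Γ.s A ∧ Set.InjOn Γ.t A

def smul (A B : Set G) : Set G :=
  {x | ∃ g ∈ A, ∃ h ∈ B, Γ.s g = Γ.t h ∧ x = Γ.mul g h}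

def sinv (A : Set G) : Set G := Γ.inv '' A

def iso : Set G := {g | Γ.s g = Γ.t g}

def conj (g h : G) : G := Γ.mul (Γ.mul g h) (Γ.inv g)

def conjClass (A : Set G) : Set G :=
  {x | ∃ g, ∃ a ∈ A, Γ.s g = Γ.t a ∧ x = Γ.conj g a}

noncomputable def muS (μ : Measure G) (E : Set G) : ℝ≥0∞ :=
  ∫⁻ x, ((E ∩ {g | Γ.s g = x}).encard : ℝ≥0∞) ∂μ

noncomputable def muT (μ : Measure G) (E : Set G) : ℝ≥0∞ :=
  ∫⁻ x, ((E ∩ {g | Γ.t g = x}).encard : ℝ≥0∞) ∂μ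

def IsMeasuredGroupoid (μ : Measure G) : Prop :=
  IsProbabilityMeasure μ ∧ μ Γ.unitsᶜ = 0 ∧
    ∀ E : Set G, MeasurableSet E → (Γ.muS μ E = 0 ↔ Γ.muT μ E = 0)

def IsErgodic (μ : Measure G) : Prop :=
  ∀ E : Set G, MeasurableSet E → E ⊆ Γ.units →
    (∀ g, Γ.s g ∈ E ↔ Γ.t g ∈ E) → μ E = 0 ∨ μ E = 1

def IsIcc (μ : Measure G) : Prop :=
  ∀ A : Set G, A ⊆ Γ.iso → MeasurableSet A → Γ.muS μ A ≠ 0 →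
    Γ.muS μ (Γ.conjClass A) < ⊤ → Γ.muS μ (A \ Γ.units) = 0

end DiscreteBorelGroupoid

/-!
Since `s` is injective on a bisection `B`, a product `g a h⁻¹` with `g, h ∈ B` and `a ∈ Iso(G)`
forces `g = h`, so `B·A·B⁻¹` is the set of conjugates `g a g⁻¹` with `g ∈ B`. Since `t` is
injective on `B` and `t (g a g⁻¹) = t g`, the conjugate determines `g`, and then
`a = g⁻¹ (g a g⁻¹) g`. So `B·A·B⁻¹` is the injective Borel image of a Borel subset of `G × G`,
hence Borel by Lusin–Souslin, and a countable cover by bisections writes `Ω_A` as a countable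
union of such sets.
-/

namespace DiscreteBorelGroupoid

variable {G : Type*} [MeasurableSpace G] (Γ : DiscreteBorelGroupoid G)

def conjBy (B A : Set G) : Set G :=
  {x | ∃ g ∈ B, ∃ a ∈ A, Γ.s g = Γ.t a ∧ x = Γ.conj g a}

section Algebra

variable {g a : G}

lemma s_mul_eq_t_inv_of_mem_iso (ha : a ∈ Γ.iso) (h : Γ.s g = Γ.t a) :
    Γ.s (Γ.mul g a) = Γ.t (Γ.inv g) := by
  rw [Γ.s_mul h, Γ.t_inv, h]
  exact ha

lemma inv_mul_mul_cancel (h : Γ.s g = Γ.t a) : Γ.mul (Γ.inv g) (Γ.mul g a) = a := by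
  rw [← Γ.mul_assoc (Γ.s_inv g) h, Γ.inv_mul_self, h, Γ.t_mul_self]

lemma mul_inv_mul_cancel (h : Γ.s a = Γ.s g) : Γ.mul (Γ.mul a (Γ.inv g)) g = a := by
  rw [Γ.mul_assoc (by rw [Γ.t_inv, h]) (Γ.s_inv g), Γ.inv_mul_self, ← h, Γ.mul_s_self]

lemma t_conj (ha : a ∈ Γ.iso) (h : Γ.s g = Γ.t a) : Γ.t (Γ.conj g a) = Γ.t g := by
  rw [conj, Γ.t_mul (Γ.s_mul_eq_t_inv_of_mem_iso ha h), Γ.t_mul h]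

lemma inv_mul_conj_mul (ha : a ∈ Γ.iso) (h : Γ.s g = Γ.t a) :
    Γ.mul (Γ.mul (Γ.inv g) (Γ.conj g a)) g = a := by
  rw [conj, ← Γ.mul_assoc (by rw [Γ.s_inv, Γ.t_mul h]) (Γ.s_mul_eq_t_inv_of_mem_iso ha h),
    Γ.inv_mul_mul_cancel h, Γ.mul_inv_mul_cancel (ha.trans h.symm)]

end Algebra

variable {A B : Set G}

lemma smul_smul_sinv_eq_conjBy (hA : A ⊆ Γ.iso) (hB : Set.InjOn Γ.s B) :
    Γ.smul (Γ.smul B A) (Γ.sinv B) = Γ.conjBy B A := by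
  ext x
  constructor
  · rintro ⟨-, ⟨g, hg, a, ha, h, rfl⟩, -, ⟨g', hg', rfl⟩, hgg', rfl⟩
    rw [Γ.s_mul_eq_t_inv_of_mem_iso (hA ha) h, Γ.t_inv, Γ.t_inv] at hgg'
    obtain rfl := hB hg hg' hgg'
    exact ⟨g, hg, a, ha, h, rfl⟩
  · rintro ⟨g, hg, a, ha, h, rfl⟩
    exact ⟨Γ.mul g a, ⟨g, hg, a, ha, h, rfl⟩, Γ.inv g, ⟨g, hg, rfl⟩,
      Γ.s_mul_eq_t_inv_of_mem_iso (hA ha) h, rfl⟩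

lemma conjClass_eq_biUnion_conjBy {𝓑 : Set (Set G)} (h𝓑 : ⋃₀ 𝓑 = Set.univ) :
    Γ.conjClass A = ⋃ B ∈ 𝓑, Γ.conjBy B A := by
  ext x
  simp only [conjClass, conjBy, Set.mem_iUnion, Set.mem_ofPred_eq, exists_prop]
  constructor
  · rintro ⟨g, a, ha, h, rfl⟩
    obtain ⟨B, hB, hg⟩ := Set.sUnion_eq_univ_iff.1 h𝓑 g
    exact ⟨B, hB, g, hg, a, ha, h, rfl⟩
  · rintro ⟨B, -, g, -, a, ha, h, rfl⟩
    exact ⟨g, a, ha, h, rfl⟩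

lemma conjBy_eq_image (B A : Set G) :
    Γ.conjBy B A = (fun p : G × G => Γ.conj p.1 p.2) '' (B ×ˢ A ∩ {p | Γ.s p.1 = Γ.t p.2}) := by
  ext x
  constructor
  · rintro ⟨g, hg, a, ha, h, rfl⟩
    exact ⟨(g, a), ⟨⟨hg, ha⟩, h⟩, rfl⟩
  · rintro ⟨⟨g, a⟩, ⟨⟨hg, ha⟩, h⟩, rfl⟩
    exact ⟨g, hg, a, ha, h, rfl⟩

lemma injOn_conj (hA : A ⊆ Γ.iso) (hB : Set.InjOn Γ.t B) :
    Set.InjOn (fun p : G × G => Γ.conj p.1 p.2) (B ×ˢ A ∩ {p | Γ.s p.1 = Γ.t p.2}) := by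
  rintro ⟨g, a⟩ ⟨⟨hg : g ∈ B, ha : a ∈ A⟩, h : Γ.s g = Γ.t a⟩
    ⟨g', a'⟩ ⟨⟨hg' : g' ∈ B, ha' : a' ∈ A⟩, h' : Γ.s g' = Γ.t a'⟩
    (hx : Γ.conj g a = Γ.conj g' a')
  obtain rfl : g = g' := hB hg hg' <| by
    rw [← Γ.t_conj (hA ha) h, ← Γ.t_conj (hA ha') h', hx]
  rw [← Γ.inv_mul_conj_mul (hA ha) h, ← Γ.inv_mul_conj_mul (hA ha') h', hx]

lemma measurable_conj : Measurable fun p : G × G => Γ.conj p.1 p.2 :=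
  Γ.measurable_mul.comp (Γ.measurable_mul.prodMk (Γ.measurable_inv.comp measurable_fst))

lemma measurableSet_conjBy [StandardBorelSpace G] (hA : A ⊆ Γ.iso) (hAm : MeasurableSet A)
    (hB : Set.InjOn Γ.t B) (hBm : MeasurableSet B) : MeasurableSet (Γ.conjBy B A) := by
  have hcomposable : MeasurableSet {p : G × G | Γ.s p.1 = Γ.t p.2} :=
    measurableSet_eq_fun (Γ.measurable_s.comp measurable_fst) (Γ.measurable_t.comp measurable_snd)
  rw [conjBy_eq_image]
  exact ((hBm.prod hAm).inter hcomposable).image_of_measurable_injOn Γ.measurable_conj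
    (Γ.injOn_conj hA hB)

end DiscreteBorelGroupoid

open DiscreteBorelGroupoid in
theorem stmt_1 {G : Type*} [MeasurableSpace G] [StandardBorelSpace G]
    (Γ : DiscreteBorelGroupoid G)
    (A : Set G) (hA : A ⊆ Γ.iso) (hAm : MeasurableSet A)
    (𝓑 : Set (Set G)) (h𝓑count : 𝓑.Countable)
    (h𝓑bis : ∀ B ∈ 𝓑, Γ.IsBisection B)
    (h𝓑borel : ∀ B ∈ 𝓑, MeasurableSet B)
    (h𝓑cover : ⋃₀ 𝓑 = Set.univ) :
    MeasurableSet (Γ.conjClass A) ∧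
      Γ.conjClass A = ⋃ B ∈ 𝓑, Γ.smul (Γ.smul B A) (Γ.sinv B) := by
  rw [Γ.conjClass_eq_biUnion_conjBy h𝓑cover]
  refine ⟨.biUnion h𝓑count fun B hB => ?_, Set.iUnion₂_congr fun B hB => ?_⟩
  · exact Γ.measurableSet_conjBy hA hAm (h𝓑bis B hB).2 (h𝓑borel B hB)
  · exact (Γ.smul_smul_sinv_eq_conjBy hA (h𝓑bis B hB).1).symm
end

section
/- For the discrete measured groupoid G = ⊔_{n ≥ 2} ({n} × S_n) with unit space (ℕ_{≥2}, μ) where μ(n) = ρ⁻¹ 2⁻ⁿ (n choose 2)⁻¹ with ρ = Σ_{n≥2} 2⁻ⁿ (n choose 2)⁻¹, and where source and target of (n, σ) are both n: the bisection A = {(n, (1 2)) : n ≥ 2} consisting of the transposition (1 2) in each symmetric group has conjugacy class Ω_A of finite μ_s measure (indeed μ_s(Ω_A) = Σ_{n≥2} μ(n)·(n choose 2) = ρ⁻¹ Σ_{n≥2} 2⁻ⁿ < ∞), but Ω_A cannot be written as a union of finitely many bisections. -/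
open MeasureTheory ENNReal

/-- The bundle of symmetric groups `⊔_n S_n` (only the fibers with `n ≥ 2`
carry mass). -/
abbrev SymmBundle : Type := Σ n : ℕ, Equiv.Perm (Fin n)

instance : MeasurableSpace SymmBundle := ⊤

def sbMul : SymmBundle → SymmBundle → SymmBundle := fun g h =>
  if e : h.1 = g.1 then ⟨g.1, g.2 * (e ▸ h.2)⟩ else g

def sbUnit : SymmBundle → SymmBundle := fun g => ⟨g.1, 1⟩

def sbInv : SymmBundle → SymmBundle := fun g => ⟨g.1, g.2⁻¹⟩

instance : MeasurableSingletonClass SymmBundle := ⟨fun _ => trivial⟩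

lemma sbMul_mk {n : ℕ} (σ τ : Equiv.Perm (Fin n)) :
    sbMul ⟨n, σ⟩ ⟨n, τ⟩ = ⟨n, σ * τ⟩ := by
  simp [sbMul]

lemma sb_fst_eq {g h : SymmBundle} (e : sbUnit g = sbUnit h) : g.1 = h.1 := by
  have := congrArg Sigma.fst e
  simpa [sbUnit] using this

/-- The bundle of symmetric groups as a discrete Borel groupoid; source and
target of `(n, σ)` are both the unit `(n, 1)`. -/
def symmBundleGroupoid : DiscreteBorelGroupoid SymmBundle where
  s := sbUnit
  t := sbUnit
  mul := sbMul
  inv := sbInv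
  s_s g := rfl
  t_s g := rfl
  s_t g := rfl
  t_t g := rfl
  mul_s_self g := by
    cases g with | mk n σ =>
    show sbMul ⟨n, σ⟩ ⟨n, 1⟩ = ⟨n, σ⟩
    rw [sbMul_mk, mul_one]
  t_mul_self g := by
    cases g with | mk n σ =>
    show sbMul ⟨n, 1⟩ ⟨n, σ⟩ = ⟨n, σ⟩
    rw [sbMul_mk, one_mul]
  s_mul {g h} e := by
    cases g with | mk n σ =>
    cases h with | mk m τ =>
    have : n = m := sb_fst_eq e
    subst this
    rw [sbMul_mk]
    rfl
  t_mul {g h} e := by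
    cases g with | mk n σ =>
    cases h with | mk m τ =>
    have : n = m := sb_fst_eq e
    subst this
    rw [sbMul_mk]
    rfl
  mul_assoc {g h k} e₁ e₂ := by
    cases g with | mk n σ =>
    cases h with | mk m τ =>
    cases k with | mk l ρ =>
    have h1 : n = m := sb_fst_eq e₁
    have h2 : m = l := sb_fst_eq e₂
    subst h1; subst h2
    rw [sbMul_mk, sbMul_mk, sbMul_mk, sbMul_mk, mul_assoc]
  s_inv g := rfl
  t_inv g := rfl
  mul_inv_self g := by
    cases g with | mk n σ =>
    show sbMul ⟨n, σ⟩ ⟨n, σ⁻¹⟩ = ⟨n, 1⟩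
    rw [sbMul_mk, mul_inv_cancel]
  inv_mul_self g := by
    cases g with | mk n σ =>
    show sbMul ⟨n, σ⁻¹⟩ ⟨n, σ⟩ = ⟨n, 1⟩
    rw [sbMul_mk, inv_mul_cancel]
  measurable_s := fun _ _ => trivial
  measurable_t := fun _ _ => trivial
  measurable_inv := fun _ _ => trivial
  measurable_mul := measurable_of_countable _
  countable_s_fibers x := Set.to_countable _
  countable_t_fibers x := Set.to_countable _

/-- The normalizing constant `ρ = Σ_{n ≥ 2} 2⁻ⁿ (n choose 2)⁻¹`. -/
noncomputable def sbRho : ℝ :=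
  ∑' n : ℕ, if 2 ≤ n then (2 : ℝ)⁻¹ ^ n * ((n.choose 2 : ℝ))⁻¹ else 0

/-- The probability measure `μ(n) = ρ⁻¹ 2⁻ⁿ (n choose 2)⁻¹` on the unit
space of the bundle. -/
noncomputable def sbMeasure : Measure SymmBundle :=
  Measure.sum fun n : ℕ =>
    (if 2 ≤ n then
        ENNReal.ofReal (sbRho⁻¹ * (2 : ℝ)⁻¹ ^ n * ((n.choose 2 : ℝ))⁻¹)
      else 0) • Measure.dirac (⟨n, 1⟩ : SymmBundle)

/-- The bisection consisting of the transposition `(1 2)` in every fiber. -/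
def sbA : Set SymmBundle :=
  {g | ∃ hn : 2 ≤ g.1, g.2 = Equiv.swap ⟨0, by omega⟩ ⟨1, by omega⟩}


section AuxProof

open DiscreteBorelGroupoid MeasureTheory

lemma sbConj_mk {n : ℕ} (σ τ : Equiv.Perm (Fin n)) :
    symmBundleGroupoid.conj ⟨n, σ⟩ ⟨n, τ⟩ = ⟨n, σ * τ * σ⁻¹⟩ := by
  show sbMul (sbMul ⟨n, σ⟩ ⟨n, τ⟩) (sbInv ⟨n, σ⟩) = _
  rw [sbMul_mk]
  show sbMul ⟨n, σ * τ⟩ ⟨n, σ⁻¹⟩ = _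
  rw [sbMul_mk]

lemma sb_summable1 :
    Summable (fun n : ℕ => if 2 ≤ n then (2 : ℝ)⁻¹ ^ n * ((n.choose 2 : ℝ))⁻¹ else 0) := by
  refine Summable.of_nonneg_of_le ?_ ?_
    (summable_geometric_of_lt_one (by norm_num) (by norm_num) : Summable fun n : ℕ => (2 : ℝ)⁻¹ ^ n)
  · intro n; split
    · positivity
    · exact le_rfl
  · intro n; split
    · rename_i h
      have hc : (1 : ℝ) ≤ ((n.choose 2 : ℕ) : ℝ) := by
        exact_mod_cast Nat.one_le_iff_ne_zero.mpr (Nat.choose_pos h).ne'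
      have h2 : ((n.choose 2 : ℕ) : ℝ)⁻¹ ≤ 1 := inv_le_one_of_one_le₀ hc
      calc (2 : ℝ)⁻¹ ^ n * ((n.choose 2 : ℕ) : ℝ)⁻¹
          ≤ (2 : ℝ)⁻¹ ^ n * 1 := by
            apply mul_le_mul_of_nonneg_left h2; positivity
        _ = (2 : ℝ)⁻¹ ^ n := mul_one _
    · positivity

lemma sb_summable2 :
    Summable (fun n : ℕ => if 2 ≤ n then (2 : ℝ)⁻¹ ^ n else 0) := by
  refine Summable.of_nonneg_of_le ?_ ?_
    (summable_geometric_of_lt_one (by norm_num) (by norm_num) : Summable fun n : ℕ => (2 : ℝ)⁻¹ ^ n)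
  · intro n; split
    · positivity
    · exact le_rfl
  · intro n; split
    · exact le_rfl
    · positivity

lemma sbRho_pos : 0 < sbRho := by
  refine Summable.tsum_pos sb_summable1 (fun n => ?_) 2 ?_
  · split
    · positivity
    · exact le_rfl
  · norm_num

lemma sb_tsum_ofReal {f : ℕ → ℝ} (h0 : ∀ n, 0 ≤ f n)
    (hs : Summable fun n => if 2 ≤ n then f n else 0) :
    (∑' n : ℕ, if 2 ≤ n then ENNReal.ofReal (f n) else 0)
      = ENNReal.ofReal (∑' n : ℕ, if 2 ≤ n then f n else 0) := by
  rw [ENNReal.ofReal_tsum_of_nonneg (fun n => by split; exacts [h0 n, le_rfl]) hs]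
  exact tsum_congr fun n => by split <;> simp

lemma sb_fiber_inter (E : Set SymmBundle) (n : ℕ) :
    E ∩ {g | sbUnit g = ⟨n, 1⟩} = Sigma.mk n '' {τ | ⟨n, τ⟩ ∈ E} := by
  ext ⟨m, τ⟩
  constructor
  · rintro ⟨hE, hu⟩
    have hm : m = n := congrArg Sigma.fst hu
    subst hm
    exact ⟨τ, hE, rfl⟩
  · rintro ⟨τ', hτ', h⟩
    have hm : n = m := congrArg Sigma.fst h
    subst hm
    cases h
    exact ⟨hτ', rfl⟩

lemma sb_muS (E : Set SymmBundle) :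
    symmBundleGroupoid.muS sbMeasure E
      = ∑' n : ℕ, (if 2 ≤ n then
            ENNReal.ofReal (sbRho⁻¹ * (2 : ℝ)⁻¹ ^ n * ((n.choose 2 : ℝ))⁻¹) else 0)
          * ({τ : Equiv.Perm (Fin n) | ⟨n, τ⟩ ∈ E}.encard : ℝ≥0∞) := by
  show (∫⁻ x, ((E ∩ {g | sbUnit g = x}).encard : ℝ≥0∞) ∂sbMeasure) = _
  rw [sbMeasure, MeasureTheory.lintegral_sum_measure]
  refine tsum_congr fun n => ?_
  rw [MeasureTheory.lintegral_smul_measure, MeasureTheory.lintegral_dirac]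
  congr 1
  rw [sb_fiber_inter E n, sigma_mk_injective.encard_image]

lemma sb_mem_conjClass {n : ℕ} {τ : Equiv.Perm (Fin n)} :
    (⟨n, τ⟩ : SymmBundle) ∈ symmBundleGroupoid.conjClass sbA ↔ 2 ≤ n ∧ τ.IsSwap := by
  constructor
  · rintro ⟨⟨m, σ⟩, ⟨l, α⟩, ⟨hl, hα⟩, he, hx⟩
    have hml : m = l := sb_fst_eq he
    subst hml
    simp only at hα
    rw [sbConj_mk] at hx
    obtain ⟨hnm, hτ⟩ := Sigma.mk.inj_iff.mp hx
    subst hnm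
    have hτ' : τ = σ * α * σ⁻¹ := eq_of_heq hτ
    have hn2 : 2 ≤ n := hl
    refine ⟨hn2, ?_⟩
    rw [hα] at hτ'
    refine ⟨σ ⟨0, by omega⟩, σ ⟨1, by omega⟩, fun hcon => ?_, ?_⟩
    · have := σ.injective hcon
      simp [Fin.ext_iff] at this
    · exact hτ'.trans (Equiv.swap_apply_apply σ _ _).symm
  · rintro ⟨hn, x, y, hxy, rfl⟩
    have h01 : (⟨0, by omega⟩ : Fin n) ≠ ⟨1, by omega⟩ := by simp [Fin.ext_iff]
    obtain ⟨c, hc⟩ := isConj_iff.mp (Equiv.Perm.isConj_swap h01 hxy)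
    refine ⟨⟨n, c⟩, ⟨n, Equiv.swap ⟨0, by omega⟩ ⟨1, by omega⟩⟩, ⟨hn, rfl⟩, rfl, ?_⟩
    rw [sbConj_mk]
    exact congrArg (Sigma.mk n) hc.symm

lemma sb_encard_swaps (n : ℕ) :
    {τ : Equiv.Perm (Fin n) | τ.IsSwap}.encard = ((n.choose 2 : ℕ) : ℕ∞) := by
  classical
  have hfin : {τ : Equiv.Perm (Fin n) | τ.IsSwap}.Finite := Set.toFinite _
  rw [← hfin.cast_ncard_eq, ← Nat.card_coe_set_eq]
  congr 1
  show Nat.card {τ : Equiv.Perm (Fin n) // τ.IsSwap} = n.choose 2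
  have hb : Function.Bijective (fun τ : {τ : Equiv.Perm (Fin n) // τ.IsSwap} =>
      (⟨τ.1.support, Equiv.Perm.card_support_eq_two.mpr τ.2⟩ :
        {s : Finset (Fin n) // s.card = 2})) := by
    constructor
    · rintro ⟨τ1, hτ1⟩ ⟨τ2, hτ2⟩ hab
      obtain ⟨x1, y1, hxy1, rfl⟩ := hτ1
      obtain ⟨x2, y2, hxy2, rfl⟩ := hτ2
      have hs := congrArg Subtype.val hab
      simp only at hs
      rw [Equiv.Perm.support_swap hxy1, Equiv.Perm.support_swap hxy2] at hs
      have hs' : ({x1, y1} : Set (Fin n)) = {x2, y2} := by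
        have := congrArg (fun s : Finset (Fin n) => (s : Set (Fin n))) hs
        simpa using this
      rcases Set.pair_eq_pair_iff.mp hs' with ⟨rfl, rfl⟩ | ⟨rfl, rfl⟩
      · rfl
      · exact Subtype.ext (Equiv.swap_comm _ _)
    · rintro ⟨s, hs⟩
      obtain ⟨x, y, hxy, rfl⟩ := Finset.card_eq_two.mp hs
      exact ⟨⟨Equiv.swap x y, x, y, hxy, rfl⟩,
        Subtype.ext (Equiv.Perm.support_swap hxy)⟩
  rw [Nat.card_eq_of_bijective _ hb, Nat.card_eq_fintype_card,
    Fintype.card_finset_len, Fintype.card_fin]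

lemma sb_muS_conj :
    symmBundleGroupoid.muS sbMeasure (symmBundleGroupoid.conjClass sbA)
      = ENNReal.ofReal (sbRho⁻¹ * ∑' n : ℕ, if 2 ≤ n then (2 : ℝ)⁻¹ ^ n else 0) := by
  rw [sb_muS]
  have hterm : ∀ n : ℕ,
      (if 2 ≤ n then
          ENNReal.ofReal (sbRho⁻¹ * (2 : ℝ)⁻¹ ^ n * ((n.choose 2 : ℝ))⁻¹) else 0)
        * ({τ : Equiv.Perm (Fin n) |
            (⟨n, τ⟩ : SymmBundle) ∈ symmBundleGroupoid.conjClass sbA}.encard : ℝ≥0∞)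
      = if 2 ≤ n then ENNReal.ofReal (sbRho⁻¹ * (2 : ℝ)⁻¹ ^ n) else 0 := by
    intro n
    by_cases hn : 2 ≤ n
    · have hset : {τ : Equiv.Perm (Fin n) |
          (⟨n, τ⟩ : SymmBundle) ∈ symmBundleGroupoid.conjClass sbA}
          = {τ : Equiv.Perm (Fin n) | τ.IsSwap} := by
        ext τ
        simp [sb_mem_conjClass, hn]
      rw [if_pos hn, if_pos hn, hset, sb_encard_swaps, ENat.toENNReal_coe]
      have hc : (0 : ℝ) < ((n.choose 2 : ℕ) : ℝ) := by
        exact_mod_cast Nat.choose_pos hn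
      rw [← ENNReal.ofReal_natCast,
        ← ENNReal.ofReal_mul (mul_nonneg (mul_nonneg (inv_nonneg.mpr sbRho_pos.le)
          (by positivity)) (by positivity))]
      congr 1
      rw [_root_.mul_assoc, inv_mul_cancel₀ hc.ne', mul_one]
    · have hset : {τ : Equiv.Perm (Fin n) |
          (⟨n, τ⟩ : SymmBundle) ∈ symmBundleGroupoid.conjClass sbA} = ∅ := by
        ext τ
        simp [sb_mem_conjClass, hn]
      rw [if_neg hn, hset]
      simp [hn]
  rw [tsum_congr hterm]
  have hρ : (0 : ℝ) ≤ sbRho⁻¹ := (inv_pos.mpr sbRho_pos).le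
  have hs : Summable (fun n : ℕ => if 2 ≤ n then sbRho⁻¹ * (2 : ℝ)⁻¹ ^ n else 0) := by
    have := sb_summable2.mul_left sbRho⁻¹
    convert this using 1
    · rfl
    funext n
    split <;> simp
  rw [sb_tsum_ofReal (fun n => by positivity) hs]
  congr 1
  rw [← tsum_mul_left]
  exact tsum_congr fun n => by split <;> simp

lemma sbMeasure_apply (E : Set SymmBundle) :
    sbMeasure E = ∑' n : ℕ, (if 2 ≤ n then
        ENNReal.ofReal (sbRho⁻¹ * (2 : ℝ)⁻¹ ^ n * ((n.choose 2 : ℝ))⁻¹)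
          * Measure.dirac (⟨n, 1⟩ : SymmBundle) E else 0) := by
  rw [sbMeasure, Measure.sum_apply _ (Set.to_countable E).measurableSet]
  refine tsum_congr fun n => ?_
  split <;> simp [Measure.smul_apply, smul_eq_mul]

lemma sb_prob : IsProbabilityMeasure sbMeasure := by
  constructor
  rw [sbMeasure_apply]
  have hterm : ∀ n : ℕ, (if 2 ≤ n then
        ENNReal.ofReal (sbRho⁻¹ * (2 : ℝ)⁻¹ ^ n * ((n.choose 2 : ℝ))⁻¹)
          * Measure.dirac (⟨n, 1⟩ : SymmBundle) Set.univ else 0)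
      = if 2 ≤ n then
          ENNReal.ofReal (sbRho⁻¹ * ((2 : ℝ)⁻¹ ^ n * ((n.choose 2 : ℝ))⁻¹)) else 0 := by
    intro n
    split
    · rw [Measure.dirac_apply_of_mem (Set.mem_univ _), mul_one, _root_.mul_assoc]
    · rfl
  rw [tsum_congr hterm]
  have hρ : (0 : ℝ) ≤ sbRho⁻¹ := (inv_pos.mpr sbRho_pos).le
  have hs : Summable (fun n : ℕ =>
      if 2 ≤ n then sbRho⁻¹ * ((2 : ℝ)⁻¹ ^ n * ((n.choose 2 : ℝ))⁻¹) else 0) := by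
    have := sb_summable1.mul_left sbRho⁻¹
    convert this using 1
    · rfl
    funext n
    split <;> simp
  rw [sb_tsum_ofReal (fun n => by positivity) hs]
  have : (∑' n : ℕ, if 2 ≤ n then sbRho⁻¹ * ((2 : ℝ)⁻¹ ^ n * ((n.choose 2 : ℝ))⁻¹) else 0)
      = sbRho⁻¹ * sbRho := by
    rw [sbRho, ← tsum_mul_left]
    exact tsum_congr fun n => by split <;> simp
  rw [this, inv_mul_cancel₀ sbRho_pos.ne', ENNReal.ofReal_one]

end AuxProof

open DiscreteBorelGroupoid in
theorem stmt_4 :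
    symmBundleGroupoid.IsMeasuredGroupoid sbMeasure ∧
    symmBundleGroupoid.IsBisection sbA ∧
    symmBundleGroupoid.muS sbMeasure (symmBundleGroupoid.conjClass sbA)
      = ENNReal.ofReal (sbRho⁻¹ * ∑' n : ℕ, if 2 ≤ n then (2 : ℝ)⁻¹ ^ n else 0) ∧
    symmBundleGroupoid.muS sbMeasure (symmBundleGroupoid.conjClass sbA) < ⊤ ∧
    ∀ (k : ℕ) (V : Fin k → Set SymmBundle),
      (∀ i, symmBundleGroupoid.IsBisection (V i)) →
      symmBundleGroupoid.conjClass sbA ≠ ⋃ i, V i := by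
  have hMG : symmBundleGroupoid.IsMeasuredGroupoid sbMeasure := by
    refine ⟨sb_prob, ?_, fun E _ => Iff.rfl⟩
    rw [sbMeasure_apply]
    have hz : ∀ n : ℕ, (if 2 ≤ n then
        ENNReal.ofReal (sbRho⁻¹ * (2 : ℝ)⁻¹ ^ n * ((n.choose 2 : ℝ))⁻¹)
          * Measure.dirac (⟨n, 1⟩ : SymmBundle) symmBundleGroupoid.unitsᶜ else 0) = 0 := by
      intro n
      have hmem : (⟨n, 1⟩ : SymmBundle) ∈ symmBundleGroupoid.units :=
        ⟨⟨n, 1⟩, rfl⟩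
      split
      · rw [Measure.dirac_apply, Set.indicator_of_notMem (by simpa using hmem)]
        exact mul_zero _
      · rfl
    rw [tsum_congr hz, tsum_zero]
  have hinj : Set.InjOn symmBundleGroupoid.s sbA := by
    rintro ⟨m, σ⟩ ⟨hm2, h1⟩ ⟨l, α⟩ ⟨hl2, h2⟩ he
    have hml : m = l := sb_fst_eq he
    subst hml
    simp only at h1 h2
    exact congrArg (Sigma.mk m) (h1.trans h2.symm)
  refine ⟨hMG, ⟨hinj, hinj⟩, sb_muS_conj, ?_, ?_⟩
  · rw [sb_muS_conj]
    exact ENNReal.ofReal_lt_top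
  · intro k V hV h
    set n := k + 2 with hn
    have hn2 : 2 ≤ n := by omega
    set z0 : Fin n := ⟨0, by omega⟩ with hz0
    set pt : Fin (k + 1) → Fin n := fun j => ⟨j.1 + 1, by omega⟩ with hpt
    set e : Fin (k + 1) → SymmBundle := fun j => ⟨n, Equiv.swap z0 (pt j)⟩ with hedef
    have he : ∀ j, e j ∈ symmBundleGroupoid.conjClass sbA := by
      intro j
      refine sb_mem_conjClass.mpr ⟨hn2, z0, pt j, ?_, rfl⟩
      intro hc; have h' := congrArg Fin.val hc; rw [hz0, hpt] at h'; dsimp only at h'; omega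
    have hmem : ∀ j, ∃ i, e j ∈ V i := by
      intro j
      have := he j
      rw [h] at this
      exact Set.mem_iUnion.mp this
    choose f hf using hmem
    obtain ⟨j, j', hjj, hff⟩ :=
      Fintype.exists_ne_map_eq_of_card_lt f (by simp)
    have h1 : e j ∈ V (f j') := hff ▸ hf j
    have heq : e j = e j' := (hV (f j')).1 h1 (hf j') rfl
    apply hjj
    have hswap : Equiv.swap z0 (pt j) = Equiv.swap z0 (pt j') :=
      eq_of_heq (Sigma.mk.inj_iff.mp heq).2
    have hptj : pt j = pt j' := by
      calc pt j = Equiv.swap z0 (pt j) z0 := (Equiv.swap_apply_left _ _).symm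
        _ = Equiv.swap z0 (pt j') z0 := by rw [hswap]
        _ = pt j' := Equiv.swap_apply_left _ _
    have hval : j.1 + 1 = j'.1 + 1 := congrArg Fin.val hptj
    exact Fin.ext (by omega)
end

section
/- Let G be a groupoid with 2-cocycle ω, and let A ⊆ Iso(G) be an ω-regular bisection, meaning ω(y, g) = ω(g, x) whenever g ∈ G, x, y ∈ A and g·x·g⁻¹ = y. Define f₀(g, a) = ω(g, a)·ω(ga, g⁻¹) on pairs with s(g) = t(a), a ∈ A. Then for any x, y ∈ A and g, h ∈ G with g·x·g⁻¹ = h·y·h⁻¹, one has f₀(g, x) = f₀(h, y). Consequently the function f(gag⁻¹) := f₀(g, a) on the conjugacy class Ω_A is well defined. -/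
open MeasureTheory ENNReal

namespace DiscreteBorelGroupoid
variable {G : Type*} [MeasurableSpace G]

/-- A `Circle`-valued 2-cocycle on a groupoid. -/
def IsCocycle (Γ : DiscreteBorelGroupoid G) (ω : G → G → Circle) : Prop :=
  ∀ x y z, Γ.s x = Γ.t y → Γ.s y = Γ.t z →
    ω x (Γ.mul y z) * ω y z = ω (Γ.mul x y) z * ω x y

/-- An `ω`-regular bisection contained in the isotropy subgroupoid. -/
def IsOmegaRegular (Γ : DiscreteBorelGroupoid G) (ω : G → G → Circle)
    (A : Set G) : Prop :=
  ∀ g x y, x ∈ A → y ∈ A → Γ.s g = Γ.t x → Γ.conj g x = y → ω y g = ω g x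

end DiscreteBorelGroupoid


section Helpers
variable {G : Type*} [MeasurableSpace G] (Γ : DiscreteBorelGroupoid G)

private lemma aux_unit_idem (g : G) : Γ.mul (Γ.s g) (Γ.s g) = Γ.s g := by
  have := Γ.mul_s_self (Γ.s g); rwa [Γ.s_s] at this

private lemma aux_inv_unit (g : G) : Γ.inv (Γ.s g) = Γ.s g := by
  have h1 := Γ.t_mul_self (Γ.inv (Γ.s g))
  rw [Γ.t_inv, Γ.s_s] at h1
  have h2 := Γ.mul_inv_self (Γ.s g)
  rw [Γ.t_s] at h2
  rw [h1] at h2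
  exact h2

private lemma aux_omega_unit_unit (ω : G → G → Circle)
    (hinv : ∀ x, ω x (Γ.inv x) = 1) (g : G) : ω (Γ.s g) (Γ.s g) = 1 := by
  have := hinv (Γ.s g); rwa [aux_inv_unit] at this

private lemma aux_omega_unit_right (ω : G → G → Circle) (hω : Γ.IsCocycle ω)
    (hinv : ∀ x, ω x (Γ.inv x) = 1) (g : G) : ω g (Γ.s g) = 1 := by
  have h := hω g (Γ.s g) (Γ.s g) (by rw [Γ.t_s]) (by rw [Γ.s_s, Γ.t_s])
  rw [aux_unit_idem, Γ.mul_s_self, aux_omega_unit_unit Γ ω hinv, mul_one] at h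
  exact mul_left_cancel (h.symm.trans (mul_one _).symm)

private lemma aux_omega_unit_left (ω : G → G → Circle) (hω : Γ.IsCocycle ω)
    (hinv : ∀ x, ω x (Γ.inv x) = 1) (g : G) : ω (Γ.t g) g = 1 := by
  have h := hω (Γ.t g) (Γ.t g) g (by rw [Γ.s_t, Γ.t_t]) (by rw [Γ.s_t])
  rw [Γ.t_mul_self] at h
  have hu : Γ.mul (Γ.t g) (Γ.t g) = Γ.t g := by
    have := aux_unit_idem Γ (Γ.t g); rwa [Γ.s_t] at this
  have huu : ω (Γ.t g) (Γ.t g) = 1 := by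
    have := aux_omega_unit_unit Γ ω hinv (Γ.t g); rwa [Γ.s_t] at this
  rw [hu, huu, mul_one] at h
  exact mul_left_cancel (h.trans (mul_one _).symm)

private lemma aux_omega_inv_left (ω : G → G → Circle) (hω : Γ.IsCocycle ω)
    (hinv : ∀ x, ω x (Γ.inv x) = 1) (g : G) : ω (Γ.inv g) g = 1 := by
  have h := hω g (Γ.inv g) g (Γ.t_inv g).symm (Γ.s_inv g)
  rw [Γ.inv_mul_self, Γ.mul_inv_self, aux_omega_unit_right Γ ω hω hinv,
    aux_omega_unit_left Γ ω hω hinv, hinv, one_mul, mul_one] at h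
  exact h

private lemma aux_key (ω : G → G → Circle) (hω : Γ.IsCocycle ω)
    (hinv : ∀ x, ω x (Γ.inv x) = 1) (g a : G)
    (h1 : Γ.s g = Γ.t a) (h2 : Γ.s a = Γ.t a) :
    ω (Γ.conj g a) g * ω (Γ.mul g a) (Γ.inv g) = 1 := by
  have hsga : Γ.s (Γ.mul g a) = Γ.s g := by
    rw [Γ.s_mul h1, h2, ← h1]
  have h := hω (Γ.mul g a) (Γ.inv g) g
    (by rw [Γ.t_inv, hsga]) (Γ.s_inv g)
  rw [Γ.inv_mul_self, ← hsga, aux_omega_unit_right Γ ω hω hinv,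
    aux_omega_inv_left Γ ω hω hinv, mul_one] at h
  exact h.symm

end Helpers

private lemma circle_div_eq {a b c d : Circle} (K : a * d = b * c) :
    a * c⁻¹ = b * d⁻¹ := by
  ext
  have hK : (a : ℂ) * d = (b : ℂ) * c := by exact_mod_cast congrArg Subtype.val K
  push_cast
  field_simp
  linear_combination hK

open DiscreteBorelGroupoid in
theorem stmt_10 {G : Type*} [MeasurableSpace G] (Γ : DiscreteBorelGroupoid G)
    (ω : G → G → Circle) (hω : Γ.IsCocycle ω)
    (hinv : ∀ x, ω x (Γ.inv x) = 1)
    (A : Set G) (hAiso : A ⊆ Γ.iso) (hAbis : Γ.IsBisection A)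
    (hreg : Γ.IsOmegaRegular ω A) :
    ∀ x ∈ A, ∀ y ∈ A, ∀ g h, Γ.s g = Γ.t x → Γ.s h = Γ.t y →
      Γ.conj g x = Γ.conj h y →
      ω g x * ω (Γ.mul g x) (Γ.inv g) = ω h y * ω (Γ.mul h y) (Γ.inv h) := by
  intro x hx y hy g h hgx hhy hconj
  have hxi : Γ.s x = Γ.t x := hAiso hx
  have hyi : Γ.s y = Γ.t y := hAiso hy
  -- basic source/target facts
  have hsgx : Γ.s (Γ.mul g x) = Γ.s g := by rw [Γ.s_mul hgx, hxi, ← hgx]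
  have hshy : Γ.s (Γ.mul h y) = Γ.s h := by rw [Γ.s_mul hhy, hyi, ← hhy]
  have htgx : Γ.t (Γ.mul g x) = Γ.t g := Γ.t_mul hgx
  have hthy : Γ.t (Γ.mul h y) = Γ.t h := Γ.t_mul hhy
  have cgx : Γ.s (Γ.mul g x) = Γ.t (Γ.inv g) := by rw [Γ.t_inv, hsgx]
  have chy : Γ.s (Γ.mul h y) = Γ.t (Γ.inv h) := by rw [Γ.t_inv, hshy]
  set z := Γ.conj g x with hz
  have htz : Γ.t z = Γ.t g := by
    rw [hz, DiscreteBorelGroupoid.conj, Γ.t_mul cgx, htgx]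
  have htz' : Γ.t z = Γ.t h := by
    rw [hconj, DiscreteBorelGroupoid.conj, Γ.t_mul chy, hthy]
  have htgh : Γ.t g = Γ.t h := by rw [← htz, htz']
  have hsz : Γ.s z = Γ.t g := by
    rw [hz, DiscreteBorelGroupoid.conj, Γ.s_mul cgx, Γ.s_inv]
  -- k = h⁻¹ g
  set k := Γ.mul (Γ.inv h) g with hkdef
  have cih : Γ.s (Γ.inv h) = Γ.t g := by rw [Γ.s_inv, ← htgh]
  have hsk : Γ.s k = Γ.s g := Γ.s_mul cih
  have htk : Γ.t k = Γ.s h := by rw [hkdef, Γ.t_mul cih, Γ.t_inv]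
  -- h * k = g
  have hhk : Γ.mul h k = g := by
    rw [hkdef, ← Γ.mul_assoc (Γ.t_inv h).symm cih, Γ.mul_inv_self, ← htgh,
      Γ.t_mul_self]
  -- z * g = g * x
  have hzg : Γ.mul z g = Γ.mul g x := by
    rw [hz, DiscreteBorelGroupoid.conj, Γ.mul_assoc cgx (Γ.s_inv g),
      Γ.inv_mul_self, ← hsgx, Γ.mul_s_self]
  -- z * h = h * y
  have hzh : Γ.mul z h = Γ.mul h y := by
    rw [hconj, DiscreteBorelGroupoid.conj, Γ.mul_assoc chy (Γ.s_inv h),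
      Γ.inv_mul_self, ← hshy, Γ.mul_s_self]
  -- h⁻¹ z = y h⁻¹
  have hihz : Γ.mul (Γ.inv h) z = Γ.mul y (Γ.inv h) := by
    have c1 : Γ.s (Γ.inv h) = Γ.t (Γ.mul h y) := by rw [Γ.s_inv, hthy]
    have c2 : Γ.s (Γ.mul h y) = Γ.t (Γ.inv h) := chy
    rw [hconj, DiscreteBorelGroupoid.conj, ← Γ.mul_assoc c1 c2,
      ← Γ.mul_assoc (Γ.s_inv h) hhy, Γ.inv_mul_self, hhy, Γ.t_mul_self]
  -- k x = y k
  have hkx : Γ.mul k x = Γ.mul y k := by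
    have czg : Γ.s z = Γ.t g := hsz
    have cihz : Γ.s (Γ.inv h) = Γ.t z := by rw [Γ.s_inv, htz']
    calc Γ.mul k x = Γ.mul (Γ.inv h) (Γ.mul g x) := Γ.mul_assoc cih hgx
      _ = Γ.mul (Γ.inv h) (Γ.mul z g) := by rw [hzg]
      _ = Γ.mul (Γ.mul (Γ.inv h) z) g := (Γ.mul_assoc cihz czg).symm
      _ = Γ.mul (Γ.mul y (Γ.inv h)) g := by rw [hihz]
      _ = Γ.mul y k := Γ.mul_assoc (by rw [Γ.t_inv, hyi, ← hhy]) cih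
  -- conj k x = y
  have hconjk : Γ.conj k x = y := by
    have csy : Γ.s y = Γ.t k := by rw [htk, hyi, ← hhy]
    rw [DiscreteBorelGroupoid.conj, hkx,
      Γ.mul_assoc csy (by rw [Γ.t_inv]), Γ.mul_inv_self, ← csy, Γ.mul_s_self]
  -- regularity
  have hr : ω y k = ω k x := hreg k x y hx hy (by rw [hsk, hgx]) hconjk
  -- cocycle equations
  have e1 := hω h k x (htk.symm) (by rw [hsk, hgx])
  rw [hhk] at e1
  have e2 := hω z h k (by rw [hsz, htgh]) (htk.symm)
  rw [hhk, hzh] at e2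
  have e3 := hω h y k hhy (by rw [htk, hyi, ← hhy])
  rw [← hkx] at e3
  -- key lemma rewrites
  have Kg := aux_key Γ ω hω hinv g x hgx hxi
  have Kh := aux_key Γ ω hω hinv h y hhy hyi
  rw [← hz] at Kg
  rw [← hconj] at Kh
  have hg' : ω (Γ.mul g x) (Γ.inv g) = (ω z g)⁻¹ :=
    (inv_eq_of_mul_eq_one_right Kg).symm
  have hh' : ω (Γ.mul h y) (Γ.inv h) = (ω z h)⁻¹ :=
    (inv_eq_of_mul_eq_one_right Kh).symm
  rw [hg', hh']
  -- final circle algebra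
  apply circle_div_eq
  -- goal : ω g x * ω z h = ω h y * ω z g
  ext
  have E1 : (ω h (Γ.mul k x) : ℂ) * ω k x = (ω g x : ℂ) * ω h k := by
    exact_mod_cast congrArg Subtype.val e1
  have E2 : (ω z g : ℂ) * ω h k = (ω (Γ.mul h y) k : ℂ) * ω z h := by
    exact_mod_cast congrArg Subtype.val e2
  have E3 : (ω h (Γ.mul k x) : ℂ) * ω y k = (ω (Γ.mul h y) k : ℂ) * ω h y := by
    exact_mod_cast congrArg Subtype.val e3
  have HR : (ω y k : ℂ) = ω k x := by exact_mod_cast congrArg Subtype.val hr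
  have hu : (ω h k : ℂ) ≠ 0 := Circle.coe_ne_zero _
  push_cast
  apply mul_right_cancel₀ hu
  linear_combination (-(ω z h : ℂ)) * E1 - (ω h y : ℂ) * E2 + (ω z h : ℂ) * E3 -
    (ω z h : ℂ) * (ω h (Γ.mul k x) : ℂ) * HR
end

section
/- Let G ⋉ X be the transformation groupoid of a nonsingular action of a countable group G on a standard probability space (X, μ). If the groupoid G ⋉ X is not icc, then there exist a finite nonempty subset C ⊆ G \ {e}, its stabilizer H = {g ∈ G : gCg⁻¹ = C}, and a positive-measure H-invariant Borel set Y ⊆ X such that: the translates gY for g ∈ G/H partition X up to measure zero (assuming the action is ergodic), and every h ∈ C acts trivially on Y and has finite conjugacy class in H. -/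
open MeasureTheory ENNReal

/-! A non-icc witness `A` gives the set `B = A \ units` of nontrivial isotropy whose conjugation
saturation `Ω` has finite measure. The fibre `F x = {g | (g, x) ∈ Ω}` is therefore finite for a.e.
`x`, consists of elements fixing `x`, and satisfies `F (g • x) = g F(x) g⁻¹`; so some finite
nonempty `C` is the value of `F` on a non-null set `Y`. Equivariance makes `Y` invariant under the
conjugation stabiliser `H` of `C`, makes `g₁Y` and `g₂Y` disjoint unless `g₁⁻¹g₂ ∈ H`, and makes
`⋃ g, gY` invariant, hence conull by ergodicity. Elements of `C` fix the points of `Y`, hence lie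
in `H`, and their `H`-conjugates stay in the finite set `C`. -/

open Pointwise

section FiberCounting

variable {G X : Type*} [Countable G] [MeasurableSpace G] [MeasurableSpace X]

lemma measurable_encard_fiber {E : Set (G × X)} (hE : MeasurableSet E) :
    Measurable fun x : X => ({g : G | (g, x) ∈ E}.encard : ℝ≥0∞) := by
  convert measurable_measure_prodMk_right (μ := Measure.count) hE with x
  exact (Measure.count_apply (hE.preimage measurable_prodMk_right)).symm

lemma measurableSet_setOf_fiber_eq {E : Set (G × X)} (hE : MeasurableSet E)
    (D : Set G) : MeasurableSet {x : X | {g : G | (g, x) ∈ E} = D} := by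
  have h : {x : X | {g : G | (g, x) ∈ E} = D} = ⋂ g : G, {x | (g, x) ∈ E ↔ g ∈ D} := by
    ext x
    simp [Set.ext_iff]
  rw [h]
  exact MeasurableSet.iInter fun g =>
    (hE.preimage measurable_prodMk_left).iff (MeasurableSet.const (g ∈ D))

end FiberCounting

lemma exists_finset_measure_setOf_eq_ne_zero {X G : Type*} [MeasurableSpace X] [Countable G]
    {μ : Measure X} {F : X → Set G} (hF : Measurable fun x => ((F x).encard : ℝ≥0∞))
    (hfin : ∫⁻ x, ((F x).encard : ℝ≥0∞) ∂μ ≠ ⊤) (hpos : ∫⁻ x, ((F x).encard : ℝ≥0∞) ∂μ ≠ 0) :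
    ∃ C : Finset G, C.Nonempty ∧ μ {x | F x = C} ≠ 0 := by
  by_contra! hnull
  have hinf : μ {x | ¬ (F x).Finite} = 0 := by
    refine measure_mono_null (fun x hx => ?_) (ae_iff.mp (ae_lt_top hF hfin))
    simpa using hx
  have hsub : {x | (F x).Nonempty} ⊆
      {x | ¬ (F x).Finite} ∪ ⋃ C : {C : Finset G // C.Nonempty}, {x | F x = C} := by
    intro x hx
    by_cases hx' : (F x).Finite
    · exact Or.inr (Set.mem_iUnion.mpr ⟨⟨hx'.toFinset, by simpa using hx⟩, by simp⟩)
    · exact Or.inl hx'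
  have hzero : μ {x | (F x).Nonempty} = 0 :=
    measure_mono_null hsub (measure_union_null hinf
      (measure_iUnion_null fun C => hnull C.1 C.2))
  refine hpos (lintegral_eq_zero_iff hF |>.mpr ?_)
  refine measure_mono_null (fun x hx => ?_) hzero
  simpa [Set.nonempty_iff_ne_empty] using hx

section ConjSaturation

variable {G X : Type*} [Group G] [MulAction G X]

-- The set `Ω_B` of the paper: `(c, x) ∈ Ω_B` iff some groupoid conjugate
-- `(k, x) (c, x) (k, x)⁻¹ = (k c k⁻¹, k • x)` lies in `B`.
def conjSaturation (B : Set (G × X)) : Set (G × X) :=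
  {p | ∃ k : G, (k * p.1 * k⁻¹, k • p.2) ∈ B}

lemma subset_conjSaturation (B : Set (G × X)) : B ⊆ conjSaturation B :=
  fun p hp => ⟨1, by simpa using hp⟩

lemma conjSaturation_mono {A B : Set (G × X)} (h : A ⊆ B) : conjSaturation A ⊆ conjSaturation B :=
  fun _ ⟨k, hk⟩ => ⟨k, h hk⟩

lemma fiber_conjSaturation_smul (B : Set (G × X)) (g : G) (x : X) :
    {c | (c, g • x) ∈ conjSaturation B} =
      ConjAct.toConjAct g • {c | (c, x) ∈ conjSaturation B} := by
  ext c
  rw [Set.mem_smul_set_iff_inv_smul_mem, ← ConjAct.toConjAct_inv, ConjAct.toConjAct_inv_smul]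
  simp only [conjSaturation, Set.mem_ofPred_eq]
  constructor
  · rintro ⟨k, hk⟩
    exact ⟨k * g, by simpa [mul_assoc, mul_smul] using hk⟩
  · rintro ⟨k, hk⟩
    exact ⟨k * g⁻¹, by simpa [mul_assoc, mul_smul] using hk⟩

lemma smul_eq_and_ne_one_of_mem_conjSaturation {B : Set (G × X)}
    (hB : ∀ p ∈ B, p.1 • p.2 = p.2 ∧ p.1 ≠ 1) {p : G × X} (hp : p ∈ conjSaturation B) :
    p.1 • p.2 = p.2 ∧ p.1 ≠ 1 := by
  obtain ⟨c, x⟩ := p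
  obtain ⟨k, hk⟩ := hp
  obtain ⟨hfix, hne⟩ := hB _ hk
  dsimp only at hfix hne ⊢
  exact ⟨by simpa [mul_smul] using hfix, fun h => hne (by simp [h])⟩

lemma measurableSet_conjSaturation [Countable G] [MeasurableSpace G] [MeasurableSingletonClass G]
    [MeasurableSpace X] (hmeas : ∀ g : G, Measurable (fun x : X => g • x)) {B : Set (G × X)}
    (hB : MeasurableSet B) : MeasurableSet (conjSaturation B) := by
  have h : conjSaturation B = ⋃ k : G, (fun p : G × X => (k * p.1 * k⁻¹, k • p.2)) ⁻¹' B := by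
    ext p
    simp [conjSaturation]
  rw [h]
  exact MeasurableSet.iUnion fun k => hB.preimage
    (((measurable_of_countable fun c : G => k * c * k⁻¹).comp measurable_fst).prodMk
      ((hmeas k).comp measurable_snd))

end ConjSaturation

namespace DiscreteBorelGroupoid

lemma muS_mono {G : Type*} [MeasurableSpace G] (Γ : DiscreteBorelGroupoid G) (μ : Measure G)
    {E E' : Set G} (h : E ⊆ E') : Γ.muS μ E ≤ Γ.muS μ E' :=
  lintegral_mono fun _ => ENat.toENNReal_le.mpr (Set.encard_mono (Set.inter_subset_inter_left _ h))

variable {G X : Type*} [MeasurableSpace G] [MeasurableSpace X] {Γ : DiscreteBorelGroupoid (G × X)}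

lemma units_eq_of_s_eq [One G] (hs : Γ.s = fun p => ((1 : G), p.2)) :
    Γ.units = {p | p.1 = 1} := by
  ext p
  rw [units, hs]
  exact ⟨by rintro ⟨q, rfl⟩; rfl, fun hp => ⟨p, Prod.ext hp.symm rfl⟩⟩

lemma mem_iso_iff_of_s_t_eq [One G] [SMul G X] (hs : Γ.s = fun p => ((1 : G), p.2))
    (ht : Γ.t = fun p => ((1 : G), p.1 • p.2)) {p : G × X} : p ∈ Γ.iso ↔ p.1 • p.2 = p.2 := by
  simp [iso, hs, ht, eq_comm]

lemma muS_map_prodMk_one [One G] [MeasurableSingletonClass G]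
    (hs : Γ.s = fun p => ((1 : G), p.2)) (μ : Measure X) (E : Set (G × X)) :
    Γ.muS (μ.map fun x => ((1 : G), x)) E = ∫⁻ x, ({g : G | (g, x) ∈ E}.encard : ℝ≥0∞) ∂μ := by
  rw [muS, (measurableEmbedding_prodMk_left 1).lintegral_map]
  refine lintegral_congr fun x => ?_
  have h : E ∩ {q | Γ.s q = (1, x)} = (fun g : G => (g, x)) '' {g : G | (g, x) ∈ E} := by
    ext ⟨g, y⟩
    simp only [hs, Set.mem_inter_iff, Set.mem_ofPred_eq, Prod.mk.injEq, true_and, Set.mem_image]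
    exact ⟨fun ⟨hE, hy⟩ => ⟨g, hy ▸ hE, rfl, hy.symm⟩,
      by rintro ⟨g', hE, ⟨rfl, rfl⟩⟩; exact ⟨hE, rfl⟩⟩
  rw [h, (Prod.mk_left_injective x).encard_image]

lemma conjSaturation_subset_conjClass [Group G] [MulAction G X]
    (hs : Γ.s = fun p => ((1 : G), p.2)) (ht : Γ.t = fun p => ((1 : G), p.1 • p.2))
    (hmul : Γ.mul = fun p q => (p.1 * q.1, q.2)) (hinv : Γ.inv = fun p => (p.1⁻¹, p.1 • p.2))
    {A : Set (G × X)} (hA : A ⊆ Γ.iso) : conjSaturation A ⊆ Γ.conjClass A := by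
  rintro ⟨c, x⟩ ⟨k, hk⟩
  have hfix := (mem_iso_iff_of_s_t_eq hs ht).mp (hA hk)
  refine ⟨(k⁻¹, k • x), _, hk, by simp [hs, ht, hfix], ?_⟩
  simp only [conj, hmul, hinv, inv_smul_smul, Prod.mk.injEq, and_true]
  group

end DiscreteBorelGroupoid

section Induced

variable {G X : Type*} [Group G] [MulAction G X]

lemma image_conj_eq_toConjAct_smul (g : G) (S : Set G) :
    (fun c => g * c * g⁻¹) '' S = ConjAct.toConjAct g • S := by
  simp only [← ConjAct.toConjAct_smul, Set.image_smul]

lemma smul_iUnion_smul (g : G) (Y : Set X) : g • ⋃ k : G, k • Y = ⋃ k : G, k • Y := by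
  simp only [Set.smul_set_iUnion, smul_smul]
  exact (Equiv.mulLeft g).surjective.iUnion_comp fun k => k • Y

lemma smul_setOf_eq_of_equivariant {F : X → Set G}
    (hF : ∀ (g : G) (x : X), F (g • x) = ConjAct.toConjAct g • F x) (g : G) (C : Set G) :
    g • {x | F x = C} = {x | F x = ConjAct.toConjAct g • C} := by
  ext x
  rw [Set.mem_smul_set_iff_inv_smul_mem]
  simp only [Set.mem_ofPred_eq, hF, map_inv, smul_eq_iff_eq_inv_smul, inv_inv]

lemma measure_compl_iUnion_smul_eq_zero [Countable G] [MeasurableSpace X] {μ : Measure X}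
    (hmeas : ∀ g : G, Measurable (fun x : X => g • x))
    (herg : ∀ E : Set X, MeasurableSet E → (∀ g : G, (fun x => g • x) ⁻¹' E = E) →
      μ E = 0 ∨ μ Eᶜ = 0)
    {Y : Set X} (hY : MeasurableSet Y) (hY0 : μ Y ≠ 0) : μ (⋃ g : G, g • Y)ᶜ = 0 := by
  have hmeasU : MeasurableSet (⋃ g : G, g • Y) := MeasurableSet.iUnion fun g => by
    rw [← Set.preimage_smul_inv]
    exact hY.preimage (hmeas g⁻¹)
  refine (herg _ hmeasU fun g => by rw [Set.preimage_smul, smul_iUnion_smul]).resolve_left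
    fun h => hY0 (measure_mono_null ?_ h)
  exact fun y hy => Set.mem_iUnion.mpr ⟨1, by rwa [one_smul]⟩

end Induced

open symmDiff in
lemma exists_induced_of_conj_equivariant {G X : Type*} [Group G] [Countable G] [MulAction G X]
    [MeasurableSpace X] {μ : Measure X} (hmeas : ∀ g : G, Measurable (fun x : X => g • x))
    (herg : ∀ E : Set X, MeasurableSet E → (∀ g : G, (fun x => g • x) ⁻¹' E = E) →
      μ E = 0 ∨ μ Eᶜ = 0)
    {F : X → Set G} (hF : ∀ (g : G) (x : X), F (g • x) = ConjAct.toConjAct g • F x)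
    (hfix : ∀ x, ∀ g ∈ F x, g • x = x ∧ g ≠ 1) {C : Finset G}
    (hY : MeasurableSet {x | F x = C}) (hY0 : μ {x | F x = C} ≠ 0) :
    (1 : G) ∉ C ∧ ∃ Y : Set X, MeasurableSet Y ∧ μ Y ≠ 0 ∧
        (∀ h ∈ {g : G | (fun c => g * c * g⁻¹) '' (C : Set G) = (C : Set G)},
          μ (((fun x => h • x) '' Y) ∆ Y) = 0) ∧
        (∀ g₁ g₂ : G, μ (((fun x => g₁ • x) '' Y) ∩ ((fun x => g₂ • x) '' Y)) ≠ 0 →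
          g₁⁻¹ * g₂ ∈ {g : G | (fun c => g * c * g⁻¹) '' (C : Set G) = (C : Set G)}) ∧
        μ (⋃ g : G, (fun x => g • x) '' Y)ᶜ = 0 ∧
        (∀ h ∈ C,
          h ∈ {g : G | (fun c => g * c * g⁻¹) '' (C : Set G) = (C : Set G)} ∧
          μ {y ∈ Y | h • y ≠ y} = 0 ∧
          Set.Finite {k : G | ∃ g ∈ {g : G |
            (fun c => g * c * g⁻¹) '' (C : Set G) = (C : Set G)}, k = g * h * g⁻¹}) := by
  set Y := {x | F x = C}
  obtain ⟨y₀, hy₀ : F y₀ = C⟩ := nonempty_of_measure_ne_zero hY0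
  have hCfix : ∀ h ∈ C, ∀ y ∈ Y, h • y = y := fun h hh y (hy : F y = C) =>
    (hfix y h (hy ▸ hh)).1
  have hCstab : ∀ h ∈ C, ConjAct.toConjAct h • (C : Set G) = C := fun h hh => by
    rw [← hy₀, ← hF, hCfix h hh y₀ hy₀]
  refine ⟨fun h1 => (hfix y₀ 1 (hy₀ ▸ h1)).2 rfl, Y, hY, hY0, ?_, ?_, ?_, ?_⟩
  · intro h (hh : _ = _)
    rw [Set.image_smul, smul_setOf_eq_of_equivariant hF, ← image_conj_eq_toConjAct_smul, hh,
      symmDiff_self, Set.bot_eq_empty, measure_empty]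
  · intro g₁ g₂ hne
    obtain ⟨x, hx₁, hx₂⟩ := nonempty_of_measure_ne_zero hne
    rw [Set.image_smul, smul_setOf_eq_of_equivariant hF] at hx₁ hx₂
    change (fun c => _) '' _ = _
    rw [image_conj_eq_toConjAct_smul, map_mul, mul_smul, ← hx₂, hx₁, map_inv, inv_smul_smul]
  · simpa only [Set.image_smul] using measure_compl_iUnion_smul_eq_zero hmeas herg hY hY0
  · intro h hh
    refine ⟨(image_conj_eq_toConjAct_smul h _).trans (hCstab h hh),
      measure_mono_null (fun y hy => (hy.2 (hCfix h hh y hy.1)).elim) measure_empty,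
      C.finite_toSet.subset ?_⟩
    rintro k ⟨g, hg, rfl⟩
    exact hg ▸ ⟨h, hh, rfl⟩

open DiscreteBorelGroupoid symmDiff in
theorem stmt_12_general {G X : Type*} [Group G] [Countable G]
    [MeasurableSpace G] [MeasurableSingletonClass G]
    [MeasurableSpace X]
    [MulAction G X] (hmeas : ∀ g : G, Measurable (fun x : X => g • x))
    (μ : Measure X)
    (herg : ∀ E : Set X, MeasurableSet E → (∀ g : G, (fun x => g • x) ⁻¹' E = E) →
      μ E = 0 ∨ μ Eᶜ = 0)
    (Γ : DiscreteBorelGroupoid (G × X))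
    (hs : Γ.s = fun p => ((1 : G), p.2))
    (ht : Γ.t = fun p => ((1 : G), p.1 • p.2))
    (hmul : Γ.mul = fun p q => (p.1 * q.1, q.2))
    (hinv : Γ.inv = fun p => (p.1⁻¹, p.1 • p.2))
    (hnoticc : ¬ Γ.IsIcc (μ.map fun x => ((1 : G), x))) :
    ∃ C : Finset G, C.Nonempty ∧ (1 : G) ∉ C ∧
      ∃ Y : Set X, MeasurableSet Y ∧ μ Y ≠ 0 ∧
        (∀ h ∈ {g : G | (fun c => g * c * g⁻¹) '' (C : Set G) = (C : Set G)},
          μ (((fun x => h • x) '' Y) ∆ Y) = 0) ∧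
        (∀ g₁ g₂ : G, μ (((fun x => g₁ • x) '' Y) ∩ ((fun x => g₂ • x) '' Y)) ≠ 0 →
          g₁⁻¹ * g₂ ∈ {g : G | (fun c => g * c * g⁻¹) '' (C : Set G) = (C : Set G)}) ∧
        μ (⋃ g : G, (fun x => g • x) '' Y)ᶜ = 0 ∧
        (∀ h ∈ C,
          h ∈ {g : G | (fun c => g * c * g⁻¹) '' (C : Set G) = (C : Set G)} ∧
          μ {y ∈ Y | h • y ≠ y} = 0 ∧
          Set.Finite {k : G | ∃ g ∈ {g : G |
            (fun c => g * c * g⁻¹) '' (C : Set G) = (C : Set G)}, k = g * h * g⁻¹}) := by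
  rw [IsIcc] at hnoticc
  push Not at hnoticc
  obtain ⟨A, hAiso, hAmeas, -, hAfin, hB0⟩ := hnoticc
  set B := A \ Γ.units
  have hBfix : ∀ p ∈ B, p.1 • p.2 = p.2 ∧ p.1 ≠ 1 := fun p ⟨hpA, hpu⟩ =>
    ⟨(mem_iso_iff_of_s_t_eq hs ht).mp (hAiso hpA), fun h => hpu (by rwa [units_eq_of_s_eq hs])⟩
  have hBmeas : MeasurableSet B := hAmeas.diff <| by
    rw [units_eq_of_s_eq hs]
    exact measurable_fst (measurableSet_singleton 1)
  have hΩ := measurableSet_conjSaturation hmeas hBmeas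
  have hint := muS_map_prodMk_one hs μ (conjSaturation B)
  obtain ⟨C, hC, hY0⟩ := exists_finset_measure_setOf_eq_ne_zero (measurable_encard_fiber hΩ)
    (hint ▸ ((Γ.muS_mono _ ((conjSaturation_mono Set.sdiff_subset).trans
      (conjSaturation_subset_conjClass hs ht hmul hinv hAiso))).trans_lt hAfin).ne)
    (hint ▸ fun h => hB0 (le_zero_iff.mp (h ▸ Γ.muS_mono _ (subset_conjSaturation B))))
  exact ⟨C, hC, exists_induced_of_conj_equivariant hmeas herg (fiber_conjSaturation_smul B)
    (fun _ _ hg => smul_eq_and_ne_one_of_mem_conjSaturation hBfix hg)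
    (measurableSet_setOf_fiber_eq hΩ _) hY0⟩

open DiscreteBorelGroupoid symmDiff in
theorem stmt_12 {G X : Type*} [Group G] [Countable G]
    [MeasurableSpace G] [MeasurableSingletonClass G]
    [MeasurableSpace X] [StandardBorelSpace X]
    [MulAction G X] (hmeas : ∀ g : G, Measurable (fun x : X => g • x))
    (μ : Measure X) [IsProbabilityMeasure μ]
    (hns : ∀ g : G, Measure.QuasiMeasurePreserving (fun x : X => g • x) μ μ)
    (herg : ∀ E : Set X, MeasurableSet E → (∀ g : G, (fun x => g • x) ⁻¹' E = E) →
      μ E = 0 ∨ μ Eᶜ = 0)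
    (Γ : DiscreteBorelGroupoid (G × X))
    (hs : Γ.s = fun p => ((1 : G), p.2))
    (ht : Γ.t = fun p => ((1 : G), p.1 • p.2))
    (hmul : Γ.mul = fun p q => (p.1 * q.1, q.2))
    (hinv : Γ.inv = fun p => (p.1⁻¹, p.1 • p.2))
    (hnoticc : ¬ Γ.IsIcc (μ.map fun x => ((1 : G), x))) :
    ∃ C : Finset G, C.Nonempty ∧ (1 : G) ∉ C ∧
      ∃ Y : Set X, MeasurableSet Y ∧ μ Y ≠ 0 ∧
        (∀ h ∈ {g : G | (fun c => g * c * g⁻¹) '' (C : Set G) = (C : Set G)},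
          μ (((fun x => h • x) '' Y) ∆ Y) = 0) ∧
        (∀ g₁ g₂ : G, μ (((fun x => g₁ • x) '' Y) ∩ ((fun x => g₂ • x) '' Y)) ≠ 0 →
          g₁⁻¹ * g₂ ∈ {g : G | (fun c => g * c * g⁻¹) '' (C : Set G) = (C : Set G)}) ∧
        μ (⋃ g : G, (fun x => g • x) '' Y)ᶜ = 0 ∧
        (∀ h ∈ C,
          h ∈ {g : G | (fun c => g * c * g⁻¹) '' (C : Set G) = (C : Set G)} ∧
          μ {y ∈ Y | h • y ≠ y} = 0 ∧
          Set.Finite {k : G | ∃ g ∈ {g : G |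
            (fun c => g * c * g⁻¹) '' (C : Set G) = (C : Set G)}, k = g * h * g⁻¹}) :=
  stmt_12_general hmeas μ herg Γ hs ht hmul hinv hnoticc
end

section
/- Let G ↷ (X, μ) be a nonsingular action of a countable group, suppose the action is induced from H ↷ Y (i.e., Y is H-invariant and {gY : g ∈ G/H} partitions X up to null sets), and suppose h ∈ H \ {e} acts trivially on Y and has finite H-conjugacy class C. Then the bisection {h} × Y in the transformation groupoid G ⋉ X has conjugacy class Ω_{{h}×Y} = ⋃_{g ∈ G} gCg⁻¹ × gY of finite measure; in fact μ_s(Ω_{{h}×Y}) = |C|. Hence G ⋉ X is not icc. -/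
open MeasureTheory ENNReal

open DiscreteBorelGroupoid symmDiff in
theorem stmt_13 {G X : Type*} [Group G] [Countable G]
    [MeasurableSpace G] [MeasurableSingletonClass G]
    [MeasurableSpace X] [StandardBorelSpace X]
    [MulAction G X] (hmeas : ∀ g : G, Measurable (fun x : X => g • x))
    (μ : Measure X) [IsProbabilityMeasure μ]
    (hns : ∀ g : G, Measure.QuasiMeasurePreserving (fun x : X => g • x) μ μ)
    (Γ : DiscreteBorelGroupoid (G × X))
    (hs : Γ.s = fun p => ((1 : G), p.2))
    (ht : Γ.t = fun p => ((1 : G), p.1 • p.2))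
    (hmul : Γ.mul = fun p q => (p.1 * q.1, q.2))
    (hinv : Γ.inv = fun p => (p.1⁻¹, p.1 • p.2))
    (H : Subgroup G) (Y : Set X) (hYm : MeasurableSet Y) (hY : μ Y ≠ 0)
    -- the action is induced from `H ↷ Y`
    (hHinv : ∀ h ∈ H, μ (((fun x => h • x) '' Y) ∆ Y) = 0)
    (hdisj : ∀ g₁ g₂ : G, g₁⁻¹ * g₂ ∉ H →
      μ (((fun x => g₁ • x) '' Y) ∩ ((fun x => g₂ • x) '' Y)) = 0)
    (hfull : μ (⋃ g : G, (fun x => g • x) '' Y)ᶜ = 0)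
    -- `h` is a nontrivial element of `H` acting trivially on `Y`
    (h : G) (hhH : h ∈ H) (hne : h ≠ 1)
    (htriv : μ {y ∈ Y | h • y ≠ y} = 0)
    -- with finite `H`-conjugacy class `C`
    (C : Finset G) (hC : (C : Set G) = {k : G | ∃ g ∈ H, k = g * h * g⁻¹}) :
    Γ.muS (μ.map fun x => ((1 : G), x)) (Γ.conjClass ({h} ×ˢ Y)) = C.card ∧
    ¬ Γ.IsIcc (μ.map fun x => ((1 : G), x)) := by
  classical
  set ν := μ.map (fun x : X => ((1 : G), x)) with hν
  have hι : MeasurableEmbedding (fun x : X => ((1 : G), x)) :=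
    measurableEmbedding_prodMk_left (1 : G)
  set T : G → Set X := fun g => (fun x => g • x) '' Y with hT
  have hTmul : ∀ a b : G, (fun x => a • x) '' T b = T (a * b) := by
    intro a b
    simp only [hT, Set.image_image, mul_smul]
  have hTnull : ∀ (g : G) (S : Set X), μ S = 0 → μ ((fun x => g • x) '' S) = 0 := by
    intro g S hS
    have himg : (fun x => g • x) '' S = (fun x => g⁻¹ • x) ⁻¹' S := by
      ext x
      constructor
      · rintro ⟨y, hy, rfl⟩; simpa [inv_smul_smul] using hy
      · intro hx; exact ⟨g⁻¹ • x, hx, by simp [smul_inv_smul]⟩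
    rw [himg]
    exact (hns g⁻¹).preimage_null hS
  have key : ∀ E : Set (G × X),
      Γ.muS ν E = ∫⁻ x, ((E ∩ {q : G × X | q.2 = x}).encard : ℝ≥0∞) ∂μ := by
    intro E
    rw [DiscreteBorelGroupoid.muS, hν, hι.lintegral_map]
    refine lintegral_congr fun x => ?_
    congr 2
    ext q
    simp [hs, Prod.ext_iff]
  set A : X → Set G := fun x =>
    {g : G | ∃ k : G, g = k * h * k⁻¹ ∧ x ∈ T (k * h)} with hA
  have hΩ : Γ.conjClass ({h} ×ˢ Y) =
      {p : G × X | ∃ k : G, ∃ y ∈ Y, p = (k * h * k⁻¹, (k * h) • y)} := by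
    ext p
    simp only [DiscreteBorelGroupoid.conjClass, DiscreteBorelGroupoid.conj, hmul, hinv,
      hs, ht, Set.mem_setOf_eq, Set.mem_prod, Set.mem_singleton_iff]
    constructor
    · rintro ⟨g, a, ⟨ha1, ha2⟩, hst, rfl⟩
      have h2 : g.2 = a.1 • a.2 := (Prod.ext_iff.mp hst).2
      refine ⟨g.1, a.2, ha2, ?_⟩
      rw [ha1] at h2
      rw [h2, Prod.mk.injEq]
      exact ⟨by rw [ha1], (mul_smul _ _ _).symm⟩
    · rintro ⟨k, y, hy, rfl⟩
      refine ⟨(k, h • y), (h, y), ⟨rfl, hy⟩, rfl, ?_⟩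
      simp [mul_smul]
  have hfib : ∀ x : X,
      (Γ.conjClass ({h} ×ˢ Y) ∩ {q : G × X | q.2 = x}).encard = (A x).encard := by
    intro x
    have hset : Γ.conjClass ({h} ×ˢ Y) ∩ {q : G × X | q.2 = x}
        = (fun g => (g, x)) '' A x := by
      ext q
      simp only [hΩ, Set.mem_inter_iff, Set.mem_setOf_eq, Set.mem_image, hA, hT]
      constructor
      · rintro ⟨⟨k, y, hy, rfl⟩, h2⟩
        simp only at h2
        exact ⟨k * h * k⁻¹, ⟨k, rfl, ⟨y, hy, h2⟩⟩, by rw [h2]⟩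
      · rintro ⟨g, ⟨k, rfl, ⟨y, hy, hxy⟩⟩, rfl⟩
        exact ⟨⟨k, y, hy, by rw [hxy]⟩, rfl⟩
    rw [hset]
    exact Function.Injective.encard_image (fun a b hab => congrArg Prod.fst hab) _
  set B1 : Set X := ⋃ (g : G) (q : H), (fun z => g • z) '' (T (q : G) ∆ Y) with hB1
  set B2 : Set X := ⋃ (p : G × G) (_ : p.1⁻¹ * p.2 ∉ H), (T p.1 ∩ T p.2) with hB2
  set B3 : Set X := (⋃ g : G, T g)ᶜ with hB3
  have hbad : μ (B1 ∪ B2 ∪ B3) = 0 := by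
    refine measure_union_null (measure_union_null ?_ ?_) hfull
    · exact measure_iUnion_null fun g => measure_iUnion_null fun q =>
        hTnull g _ (hHinv q q.2)
    · exact measure_iUnion_null fun p => measure_iUnion_null fun hp => hdisj p.1 p.2 hp
  have hae : ∀ᵐ x ∂μ, ((A x).encard : ℝ≥0∞) = (C.card : ℝ≥0∞) := by
    refine (measure_eq_zero_iff_ae_notMem.mp hbad).mono fun x hx => ?_
    have hx3 : x ∈ ⋃ g : G, T g := by
      by_contra hc
      exact hx (Or.inr hc)
    obtain ⟨k₀, hk₀⟩ : ∃ k₀, x ∈ T k₀ := by simpa using hx3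
    have hx1 : ∀ (g q : G), q ∈ H → x ∉ (fun z => g • z) '' (T q ∆ Y) := by
      intro g q hq hc
      exact hx (Or.inl (Or.inl (Set.mem_iUnion.mpr ⟨g, Set.mem_iUnion.mpr ⟨⟨q, hq⟩, hc⟩⟩)))
    have hx2 : ∀ p : G × G, p.1⁻¹ * p.2 ∉ H → x ∉ T p.1 ∩ T p.2 := by
      intro p hp hc
      exact hx (Or.inl (Or.inr (Set.mem_iUnion.mpr ⟨p, Set.mem_iUnion.mpr ⟨hp, hc⟩⟩)))
    have hbadY : ∀ q : G, q ∈ H → x ∈ T (k₀ * q) := by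
      intro q hq
      obtain ⟨y, hy, rfl⟩ := hk₀
      rw [← hTmul]
      refine ⟨y, ?_, rfl⟩
      by_contra hyq
      exact hx1 k₀ q hq ⟨y, Set.mem_symmDiff.mpr (Or.inr ⟨hy, hyq⟩), rfl⟩
    have hAx : A x = (fun c => k₀ * c * k₀⁻¹) '' (C : Set G) := by
      ext g
      simp only [hA, Set.mem_setOf_eq, Set.mem_image, hC]
      constructor
      · rintro ⟨k, rfl, hxk⟩
        have hkH : k₀⁻¹ * (k * h) ∈ H := by
          by_contra hn
          exact hx2 (k₀, k * h) hn ⟨hk₀, hxk⟩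
        have hqH : k₀⁻¹ * k ∈ H := by
          have h2 : k₀⁻¹ * k = (k₀⁻¹ * (k * h)) * h⁻¹ := by group
          rw [h2]
          exact H.mul_mem hkH (H.inv_mem hhH)
        refine ⟨(k₀⁻¹ * k) * h * (k₀⁻¹ * k)⁻¹, ⟨k₀⁻¹ * k, hqH, rfl⟩, ?_⟩
        group
      · rintro ⟨c, ⟨q, hqH, rfl⟩, rfl⟩
        refine ⟨k₀ * q, by group, ?_⟩
        have hmem : x ∈ T (k₀ * (q * h)) := hbadY (q * h) (H.mul_mem hqH hhH)
        rwa [← _root_.mul_assoc] at hmem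
    have hinj : Function.Injective (fun c : G => k₀ * c * k₀⁻¹) :=
      fun a b hab => mul_left_cancel (mul_right_cancel hab)
    rw [hAx, hinj.encard_image, Set.encard_coe_eq_coe_finsetCard]
    simp
  have part1 : Γ.muS ν (Γ.conjClass ({h} ×ˢ Y)) = C.card := by
    rw [key]
    calc ∫⁻ x, ((Γ.conjClass ({h} ×ˢ Y) ∩ {q : G × X | q.2 = x}).encard : ℝ≥0∞) ∂μ
        = ∫⁻ x, ((A x).encard : ℝ≥0∞) ∂μ := lintegral_congr fun x => by rw [hfib x]
      _ = ∫⁻ _, (C.card : ℝ≥0∞) ∂μ := lintegral_congr_ae hae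
      _ = C.card := by simp
  refine ⟨part1, fun hicc => ?_⟩
  letI := upgradeStandardBorel X
  set Y' : Set X := {y ∈ Y | h • y = y} with hY'
  have hY'm : MeasurableSet Y' := by
    have heq : MeasurableSet {y : X | h • y = y} :=
      MeasureTheory.StronglyMeasurable.measurableSet_eq_fun (hmeas h).stronglyMeasurable measurable_id.stronglyMeasurable
    exact hYm.inter heq
  have hY'measure : μ Y' = μ Y := by
    have hYdiff : Y' = Y \ {y ∈ Y | h • y ≠ y} := by
      ext y
      simp only [hY', Set.mem_setOf_eq, Set.mem_diff]
      tauto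
    rw [hYdiff]
    exact measure_diff_null htriv
  have hmuSprod : ∀ Z : Set X, MeasurableSet Z → Γ.muS ν (({h} : Set G) ×ˢ Z) = μ Z := by
    intro Z hZ
    rw [key]
    have hpt : ∀ x, ((({h} : Set G) ×ˢ Z ∩ {q : G × X | q.2 = x}).encard : ℝ≥0∞)
        = Z.indicator 1 x := by
      intro x
      by_cases hxZ : x ∈ Z
      · have hone : ({h} : Set G) ×ˢ Z ∩ {q : G × X | q.2 = x} = {(h, x)} := by
          ext q
          simp only [Set.mem_inter_iff, Set.mem_prod, Set.mem_singleton_iff,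
            Set.mem_setOf_eq, Prod.ext_iff]
          constructor
          · rintro ⟨⟨h1, h2⟩, h3⟩; exact ⟨h1, h3⟩
          · rintro ⟨h1, h2⟩; exact ⟨⟨h1, h2 ▸ hxZ⟩, h2⟩
        rw [hone]
        simp [hxZ]
      · have hemp : ({h} : Set G) ×ˢ Z ∩ {q : G × X | q.2 = x} = ∅ := by
          ext q
          simp only [Set.mem_inter_iff, Set.mem_prod, Set.mem_singleton_iff,
            Set.mem_setOf_eq, Set.mem_empty_iff_false, iff_false, not_and]
          rintro ⟨h1, h2⟩ h3
          exact hxZ (h3 ▸ h2)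
        rw [hemp]
        simp [hxZ]
    simp_rw [hpt]
    exact lintegral_indicator_one hZ
  have hAiso : (({h} : Set G) ×ˢ Y') ⊆ Γ.iso := by
    rintro ⟨a, b⟩ ⟨ha, hb⟩
    simp only [Set.mem_singleton_iff] at ha
    show Γ.s (a, b) = Γ.t (a, b)
    rw [hs, ht]
    simp only
    rw [ha, hb.2]
  have hAmeas : MeasurableSet (({h} : Set G) ×ˢ Y') :=
    (measurableSet_singleton h).prod hY'm
  have hAne : Γ.muS ν (({h} : Set G) ×ˢ Y') ≠ 0 := by
    rw [hmuSprod Y' hY'm, hY'measure]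
    exact hY
  have hmono : ∀ E F : Set (G × X), E ⊆ F → Γ.muS ν E ≤ Γ.muS ν F := by
    intro E F hEF
    refine lintegral_mono fun p => ?_
    exact ENat.toENNReal_le.mpr (Set.encard_mono (Set.inter_subset_inter_left _ hEF))
  have hccsub : Γ.conjClass (({h} : Set G) ×ˢ Y') ⊆ Γ.conjClass ({h} ×ˢ Y) := by
    rintro p ⟨g, a, ha, hst, rfl⟩
    exact ⟨g, a, ⟨ha.1, ha.2.1⟩, hst, rfl⟩
  have hlt : Γ.muS ν (Γ.conjClass (({h} : Set G) ×ˢ Y')) < ⊤ :=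
    lt_of_le_of_lt (hmono _ _ hccsub) (part1 ▸ ENNReal.natCast_lt_top _)
  have hzero := hicc (({h} : Set G) ×ˢ Y') hAiso hAmeas hAne hlt
  have hnu : ∀ p ∈ ({h} : Set G) ×ˢ Y', p ∉ Γ.units := by
    rintro p hpA hpu
    obtain ⟨q, hq⟩ := hpu
    have hp1 : p.1 = 1 := by rw [← hq, hs]
    have hph : p.1 = h := hpA.1
    exact hne (hp1 ▸ hph).symm
  have hdiffeq : (({h} : Set G) ×ˢ Y') \ Γ.units = ({h} : Set G) ×ˢ Y' := by
    ext p
    simp only [Set.mem_diff]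
    exact ⟨fun hp => hp.1, fun hp => ⟨hp, hnu p hp⟩⟩
  rw [hdiffeq, hmuSprod Y' hY'm, hY'measure] at hzero
  exact hY hzero
end

section
/- Let G ↷_σ Y be a partial action of a countable group on a standard Borel space Y. Then there exists a standard Borel space X, a global Borel action G ↷ X, and a Borel embedding ι: Y ↪ X such that the induced subgroupoid (G ⋉ X)|_{ι(Y)} is isomorphic to the partial transformation groupoid G ⋉_σ Y, and ι(Y) is G ⋉ X-full, i.e., G·ι(Y) = X. -/
set_option linter.unusedSectionVars false

open MeasureTheory

/-- A Borel partial action of a group `G` on (a Borel subset `carrier` of)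
a Borel space `X`: Borel domains `dom g` and Borel partial isomorphisms
`map g : dom g⁻¹ → dom g` with `map 1 = id` and `map g ∘ map h ⊆ map (g * h)`
(as graphs). The maps are implemented as total functions whose values
only matter on the corresponding domains. -/
structure PartialAction (G X : Type*) [Group G] [MeasurableSpace X] where
  carrier : Set X
  dom : G → Set X
  map : G → X → X
  carrier_measurable : MeasurableSet carrier
  dom_measurable : ∀ g, MeasurableSet (dom g)
  map_measurable : ∀ g, Measurable (map g)
  dom_subset : ∀ g, dom g ⊆ carrier
  dom_one : dom 1 = carrier
  map_one : ∀ x ∈ carrier, map 1 x = x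
  map_mem : ∀ g x, x ∈ dom g⁻¹ → map g x ∈ dom g
  map_inv : ∀ g x, x ∈ dom g⁻¹ → map g⁻¹ (map g x) = x
  map_comp : ∀ g h x, x ∈ dom h⁻¹ → map h x ∈ dom g⁻¹ →
    x ∈ dom (g * h)⁻¹ ∧ map (g * h) x = map g (map h x)

universe u v

namespace GlobAux

variable {G : Type u} {Y : Type v} [Group G] [MeasurableSpace Y]

/-- The equivalence relation on `G × Y` whose quotient is the globalization. -/
def Rel (σ : PartialAction G Y) (p q : G × Y) : Prop :=
  p.2 ∈ σ.dom (p.1⁻¹ * q.1) ∧ σ.map (q.1⁻¹ * p.1) p.2 = q.2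

variable (σ : PartialAction G Y) (hcar : σ.carrier = Set.univ)

include hcar

lemma mem_univ_dom (g : G) (x : Y) : x ∈ σ.dom (g⁻¹ * g) := by
  simp [σ.dom_one, hcar]

lemma map_one' (x : Y) : σ.map 1 x = x := σ.map_one x (by simp [hcar])

lemma rel_refl (p : G × Y) : Rel σ p p := by
  refine ⟨mem_univ_dom σ hcar _ _, ?_⟩
  simp [map_one' σ hcar]

omit hcar in
lemma rel_symm {p q : G × Y} (h : Rel σ p q) : Rel σ q p := by
  obtain ⟨h1, h2⟩ := h
  have hd : p.2 ∈ σ.dom (q.1⁻¹ * p.1)⁻¹ := by simpa [mul_inv_rev] using h1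
  refine ⟨?_, ?_⟩
  · rw [← h2]; exact σ.map_mem _ _ hd
  · rw [← h2]
    have := σ.map_inv (q.1⁻¹ * p.1) p.2 hd
    simpa [mul_inv_rev] using this

omit hcar in
lemma rel_trans {p q r : G × Y} (h : Rel σ p q) (h' : Rel σ q r) : Rel σ p r := by
  obtain ⟨h1, h2⟩ := h
  obtain ⟨h1', h2'⟩ := h'
  have hd : p.2 ∈ σ.dom (q.1⁻¹ * p.1)⁻¹ := by simpa [mul_inv_rev] using h1
  have hd' : σ.map (q.1⁻¹ * p.1) p.2 ∈ σ.dom (r.1⁻¹ * q.1)⁻¹ := by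
    rw [h2]; simpa [mul_inv_rev] using h1'
  obtain ⟨c1, c2⟩ := σ.map_comp (r.1⁻¹ * q.1) (q.1⁻¹ * p.1) p.2 hd hd'
  have e1 : r.1⁻¹ * q.1 * (q.1⁻¹ * p.1) = r.1⁻¹ * p.1 := by group
  refine ⟨?_, ?_⟩
  · rw [e1] at c1; simpa [mul_inv_rev] using c1
  · rw [e1] at c2; rw [c2, h2, h2']

/-- The set of group elements giving a point equivalent to `p`. -/
def S (σ : PartialAction G Y) (p : G × Y) : Set G := {h | p.2 ∈ σ.dom (p.1⁻¹ * h)}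

lemma self_mem_S (p : G × Y) : p.1 ∈ S σ p := mem_univ_dom σ hcar _ _

omit hcar in
lemma rel_of_mem_S {p : G × Y} {k : G} (hk : k ∈ S σ p) :
    Rel σ p (k, σ.map (k⁻¹ * p.1) p.2) := ⟨hk, rfl⟩

omit hcar in
lemma S_eq_of_rel {p q : G × Y} (h : Rel σ p q) : S σ p = S σ q := by
  ext k
  constructor
  · intro hk
    exact (rel_trans σ (rel_symm σ h) (rel_of_mem_S σ hk)).1
  · intro hk
    exact (rel_trans σ h (rel_of_mem_S σ hk)).1

omit hcar in
lemma rel_shift {p q : G × Y} (h : Rel σ p q) (g : G) :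
    Rel σ (g * p.1, p.2) (g * q.1, q.2) := by
  obtain ⟨h1, h2⟩ := h
  have e1 : (g * p.1)⁻¹ * (g * q.1) = p.1⁻¹ * q.1 := by group
  have e2 : (g * q.1)⁻¹ * (g * p.1) = q.1⁻¹ * p.1 := by group
  exact ⟨by rw [e1]; exact h1, by rw [e2]; exact h2⟩

lemma snd_eq_of_rel {p q : G × Y} (h : Rel σ p q) (hfst : p.1 = q.1) : p.2 = q.2 := by
  obtain ⟨_, h2⟩ := h
  rw [← h2, hfst, inv_mul_cancel, map_one' σ hcar]

variable (e : G → ℕ) (he : Function.Injective e)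

lemma exists_min (p : G × Y) : ∃ h, h ∈ S σ p ∧ ∀ k ∈ S σ p, e h ≤ e k := by
  have hne : (e '' S σ p).Nonempty := ⟨e p.1, ⟨p.1, self_mem_S σ hcar p, rfl⟩⟩
  obtain ⟨h, hh, hhe⟩ := Nat.sInf_mem hne
  exact ⟨h, hh, fun k hk => hhe ▸ Nat.sInf_le ⟨k, hk, rfl⟩⟩

/-- The canonical representative's group component. -/
noncomputable def repG (p : G × Y) : G := (exists_min σ hcar e p).choose

lemma repG_mem (p : G × Y) : repG σ hcar e p ∈ S σ p := (exists_min σ hcar e p).choose_spec.1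

lemma repG_min (p : G × Y) : ∀ k ∈ S σ p, e (repG σ hcar e p) ≤ e k :=
  (exists_min σ hcar e p).choose_spec.2

include he in
lemma repG_unique {p : G × Y} {m : G} (hm : m ∈ S σ p) (hmin : ∀ k ∈ S σ p, e m ≤ e k) :
    repG σ hcar e p = m :=
  he (le_antisymm (repG_min σ hcar e p m hm) (hmin _ (repG_mem σ hcar e p)))

include he in
lemma repG_eq_of_rel {p q : G × Y} (h : Rel σ p q) :
    repG σ hcar e p = repG σ hcar e q := by
  have hS := S_eq_of_rel σ h
  exact repG_unique σ hcar e he (hS ▸ repG_mem σ hcar e q) (hS ▸ repG_min σ hcar e q)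

/-- The canonical representative of the class of `p`. -/
noncomputable def rho (p : G × Y) : G × Y :=
  (repG σ hcar e p, σ.map ((repG σ hcar e p)⁻¹ * p.1) p.2)

lemma rel_rho (p : G × Y) : Rel σ p (rho σ hcar e p) :=
  rel_of_mem_S σ (repG_mem σ hcar e p)

include he in
lemma rho_eq_of_rel {p q : G × Y} (h : Rel σ p q) :
    rho σ hcar e p = rho σ hcar e q := by
  have hrel : Rel σ (rho σ hcar e p) (rho σ hcar e q) :=
    rel_trans σ (rel_symm σ (rel_rho σ hcar e p)) (rel_trans σ h (rel_rho σ hcar e q))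
  have hfst : (rho σ hcar e p).1 = (rho σ hcar e q).1 := repG_eq_of_rel σ hcar e he h
  exact Prod.ext hfst (snd_eq_of_rel σ hcar hrel hfst)

/-- The Borel transversal. -/
def T (σ : PartialAction G Y) (e : G → ℕ) : Set (G × Y) :=
  {p | ∀ k, k ∈ S σ p → e p.1 ≤ e k}

lemma rho_mem_T (p : G × Y) : rho σ hcar e p ∈ T σ e := by
  intro k hk
  have hS : S σ (rho σ hcar e p) = S σ p := (S_eq_of_rel σ (rel_rho σ hcar e p)).symm
  exact repG_min σ hcar e p k (hS ▸ hk)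

include he in
lemma rho_of_mem_T {p : G × Y} (hp : p ∈ T σ e) : rho σ hcar e p = p := by
  have h1 : repG σ hcar e p = p.1 := repG_unique σ hcar e he (self_mem_S σ hcar p) hp
  unfold rho
  rw [h1, inv_mul_cancel, map_one' σ hcar]

section Measurable

variable [MeasurableSpace G] [MeasurableSingletonClass G] [Countable G]

omit hcar in
lemma measurable_from_G_prod {γ : Type*} [MeasurableSpace γ] {f : G × Y → γ}
    (hf : ∀ g, Measurable fun y => f (g, y)) : Measurable f := by
  have : Measurable fun q : Y × G => f (q.2, q.1) := measurable_from_prod_countable_left hf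
  exact this.comp measurable_swap

omit hcar in
lemma measurable_T : MeasurableSet (T σ e) := by
  have : T σ e = ⋂ k, {p : G × Y | p.2 ∈ σ.dom (p.1⁻¹ * k)}ᶜ ∪ {p | e p.1 ≤ e k} := by
    ext p
    simp only [T, S, Set.mem_setOf_eq, Set.mem_iInter, Set.mem_union, Set.mem_compl_iff]
    exact ⟨fun h k => or_iff_not_imp_left.2 fun hk => h k (not_not.1 hk),
      fun h k hk => (h k).resolve_left (not_not.2 hk)⟩
  rw [this]
  refine MeasurableSet.iInter fun k => MeasurableSet.union ?_ ?_
  · refine MeasurableSet.compl ?_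
    have : {p : G × Y | p.2 ∈ σ.dom (p.1⁻¹ * k)} = ⋃ g, {g} ×ˢ σ.dom (g⁻¹ * k) := by
      ext ⟨g, y⟩
      simp [Set.mem_iUnion]
    rw [this]
    exact MeasurableSet.iUnion fun g => (measurableSet_singleton g).prod (σ.dom_measurable _)
  · have : {p : G × Y | e p.1 ≤ e k} = {g : G | e g ≤ e k} ×ˢ (Set.univ : Set Y) := by
      ext ⟨g, y⟩; simp
    rw [this]
    exact ((Set.to_countable _).measurableSet).prod MeasurableSet.univ

include he in
lemma measurable_setOf_repG_eq (g m : G) :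
    MeasurableSet {y : Y | repG σ hcar e (g, y) = m} := by
  have : {y : Y | repG σ hcar e (g, y) = m}
      = σ.dom (g⁻¹ * m) ∩ ⋂ k, (σ.dom (g⁻¹ * k))ᶜ ∪ {y | e m ≤ e k} := by
    ext y
    simp only [Set.mem_setOf_eq, Set.mem_inter_iff, Set.mem_iInter, Set.mem_union,
      Set.mem_compl_iff]
    constructor
    · intro h
      subst h
      exact ⟨repG_mem σ hcar e (g, y), fun k => or_iff_not_imp_left.2 fun hk =>
        repG_min σ hcar e (g, y) k (not_not.1 hk)⟩
    · rintro ⟨hm, hmin⟩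
      exact repG_unique σ hcar e he hm fun k hk => (hmin k).resolve_left (not_not.2 hk)
  rw [this]
  refine (σ.dom_measurable _).inter (MeasurableSet.iInter fun k =>
    MeasurableSet.union (σ.dom_measurable _).compl ?_)
  by_cases h : e m ≤ e k
  · simp [h]
  · simp [h]

include he in
lemma measurable_rho : Measurable (rho σ hcar e) := by
  apply measurable_from_G_prod
  intro g
  have h1 : Measurable fun y => repG σ hcar e (g, y) :=
    measurable_to_countable fun m =>
      measurable_setOf_repG_eq σ hcar e he g (repG σ hcar e (g, m))
  refine Measurable.prod h1 ?_
  have h2 : Measurable fun q : Y × G => σ.map (q.2⁻¹ * g) q.1 :=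
    measurable_from_prod_countable_left fun m => σ.map_measurable (m⁻¹ * g)
  exact h2.comp (measurable_id.prodMk h1)

end Measurable

end GlobAux

open GlobAux

theorem stmt_16 {G : Type u} {Y : Type v} [Group G] [Countable G]
    [MeasurableSpace Y] [StandardBorelSpace Y]
    (σ : PartialAction G Y) (hcar : σ.carrier = Set.univ) :
    ∃ (X : Type (max u v)) (_ : MeasurableSpace X), StandardBorelSpace X ∧
      ∃ act : G → X → X,
        (∀ x, act 1 x = x) ∧
        (∀ g h x, act (g * h) x = act g (act h x)) ∧
        (∀ g, Measurable (act g)) ∧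
        ∃ ι : Y → X, Measurable ι ∧ Function.Injective ι ∧
          -- the induced subgroupoid on `ι(Y)` is the partial transformation groupoid
          (∀ g y, act g (ι y) ∈ Set.range ι ↔ y ∈ σ.dom g⁻¹) ∧
          (∀ g y, y ∈ σ.dom g⁻¹ → act g (ι y) = ι (σ.map g y)) ∧
          -- `ι(Y)` is full
          (∀ x : X, ∃ g y, act g (ι y) = x) := by
  classical
  letI : MeasurableSpace G := ⊤
  haveI : MeasurableSingletonClass G := ⟨fun _ => trivial⟩
  haveI : DiscreteMeasurableSpace G := ⟨fun _ => trivial⟩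
  obtain ⟨e, he⟩ := Countable.exists_injective_nat G
  refine ⟨T σ e, inferInstance, (measurable_T σ e).standardBorel, ?_⟩
  let ρ : G × Y → T σ e := fun p => ⟨rho σ hcar e p, rho_mem_T σ hcar e p⟩
  have hρ_rel : ∀ {p q : G × Y}, Rel σ p q → ρ p = ρ q := fun h =>
    Subtype.ext (rho_eq_of_rel σ hcar e he h)
  have hρ_id : ∀ x : T σ e, ρ (x : G × Y) = x := fun x =>
    Subtype.ext (rho_of_mem_T σ hcar e he x.2)
  have hrel_ρ : ∀ p : G × Y, Rel σ p (ρ p : G × Y) := fun p => rel_rho σ hcar e p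
  set act : G → T σ e → T σ e := fun g x => ρ (g * (x : G × Y).1, (x : G × Y).2) with hact
  set ι : Y → T σ e := fun y => ρ (1, y) with hι
  -- acting on a representative is the same as acting on any point of the class
  have key : ∀ (g : G) (p : G × Y), act g (ρ p) = ρ (g * p.1, p.2) := by
    intro g p
    exact (hρ_rel (rel_shift σ (hrel_ρ p) g)).symm
  have hact_ι : ∀ (g : G) (y : Y), act g (ι y) = ρ (g, y) := by
    intro g y
    have := key g (1, y)
    simpa using this
  refine ⟨act, ?_, ?_, ?_, ι, ?_, ?_, ?_, ?_, ?_⟩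
  · intro x
    have : act 1 x = ρ ((x : G × Y).1, (x : G × Y).2) := by
      simp only [hact, one_mul]
    rw [this]
    simpa using hρ_id x
  · intro g h x
    have h1 : act h x = ρ (h * (x : G × Y).1, (x : G × Y).2) := rfl
    rw [h1, key g _, hact]
    simp only [← mul_assoc]
  · intro g
    have : Measurable ρ := (measurable_rho σ hcar e he).subtype_mk
    exact this.comp ((measurable_const.mul (measurable_fst.comp measurable_subtype_coe)).prodMk
      (measurable_snd.comp measurable_subtype_coe))
  · exact ((measurable_rho σ hcar e he).subtype_mk).comp
      (measurable_const.prodMk measurable_id)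
  · intro y y' hyy'
    have : Rel σ (1, y) (1, y') :=
      rel_trans σ (hrel_ρ (1, y)) (by rw [congrArg Subtype.val hyy']; exact rel_symm σ (hrel_ρ (1, y')))
    exact snd_eq_of_rel σ hcar this rfl
  · intro g y
    rw [hact_ι g y]
    constructor
    · rintro ⟨z, hz⟩
      have : Rel σ (g, y) (1, z) :=
        rel_trans σ (hrel_ρ (g, y))
          (by rw [show (ρ (g, y) : G × Y) = (ρ (1, z) : G × Y) from congrArg Subtype.val hz.symm]
              exact rel_symm σ (hrel_ρ (1, z)))
      have h1 := this.1
      simpa using h1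
    · intro hy
      refine ⟨σ.map (1⁻¹ * g) y, (hρ_rel ⟨by simpa using hy, rfl⟩).symm⟩
  · intro g y hy
    rw [hact_ι g y]
    have : Rel σ (g, y) (1, σ.map (1⁻¹ * g) y) := ⟨by simpa using hy, rfl⟩
    have := hρ_rel this
    rw [this, hι]
    simp
  · intro x
    refine ⟨(x : G × Y).1, (x : G × Y).2, ?_⟩
    rw [hact_ι]
    simpa using hρ_id x
end

section
/- Let σ: (X, μ) → (X, μ) be a measurable map on a Borel probability space and let 𝒢(σ) = {(x, n−m, y) : n, m ≥ 0, σⁿ(x) = σᵐ(y)} be the Deaconu–Renault groupoid with s(x, k, y) = y, t(x, k, y) = x. Then: (a) Iso(𝒢(σ)) = {(x, k−l, x) : σᵏ(x) = σˡ(x)}; (b) conjugating an isotropy element (y, m, y) by (x, n, y) gives (x, m, x); (c) for each n ∈ ℤ, the set B_n = (X × {n} × X) ∩ Iso(𝒢(σ)) is a conjugation-invariant Borel bisection; and (d) 𝒢(σ) is icc if and only if μ_s(B_n) = 0 for all n ≠ 0, if and only if σ is essentially free, meaning {x : ∃ m ≠ n ≥ 0 with σᵐ(x) = σⁿ(x)}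 is μ-null. -/
open MeasureTheory
open scoped ENNReal

/-- The Deaconu–Renault groupoid of a measurable map `σ : X → X`, as a subset
of `X × ℤ × X`, with `s (x, k, y) = y`, `t (x, k, y) = x`, and multiplication
`(x, k, y)(y, l, z) = (x, k + l, z)`. -/
def DR {X : Type*} (σ : X → X) : Set (X × ℤ × X) :=
  {p | ∃ n m : ℕ, (n : ℤ) - m = p.2.1 ∧ σ^[n] p.1 = σ^[m] p.2.2}

/-- The isotropy subgroupoid of the Deaconu–Renault groupoid. -/
def DRIso {X : Type*} (σ : X → X) : Set (X × ℤ × X) :=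
  {p ∈ DR σ | p.1 = p.2.2}

/-- The (everywhere-defined extension of the) multiplication of the
Deaconu–Renault groupoid. -/
def DRmul {X : Type*} : X × ℤ × X → X × ℤ × X → X × ℤ × X :=
  fun p q => (p.1, p.2.1 + q.2.1, q.2.2)

/-- The conjugacy class of a subset `B` of the isotropy of the
Deaconu–Renault groupoid. -/
def DRconjClass {X : Type*} (σ : X → X) (B : Set (X × ℤ × X)) :
    Set (X × ℤ × X) :=
  {q | ∃ p ∈ B, ∃ (x : X) (n : ℤ), (x, n, p.1) ∈ DR σ ∧ q = (x, p.2.1, x)}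

/-- The measure `μ_s` of the Deaconu–Renault groupoid. -/
noncomputable def DRmuS {X : Type*} [MeasurableSpace X] (μ : Measure X)
    (E : Set (X × ℤ × X)) : ℝ≥0∞ :=
  ∫⁻ y, ((E ∩ {p | p.2.2 = y}).encard : ℝ≥0∞) ∂μ

/-- The conjugation-invariant bisection `B_n` of the isotropy. -/
def DRBn {X : Type*} (σ : X → X) (n : ℤ) : Set (X × ℤ × X) :=
  {p ∈ DRIso σ | p.2.1 = n}

/-- The icc property for the Deaconu–Renault groupoid: every non-null Borel
subset of the isotropy with finite-measure conjugacy class is contained in the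
unit space `{(x, 0, x)}` up to a null set. -/
def DRIcc {X : Type*} [MeasurableSpace X] (σ : X → X) (μ : Measure X) : Prop :=
  ∀ B ⊆ DRIso σ, MeasurableSet B → DRmuS μ B ≠ 0 →
    DRmuS μ (DRconjClass σ B) < ⊤ → DRmuS μ {p ∈ B | p.2.1 ≠ 0} = 0

section Aux

variable {X : Type*}

/-- The set of points with a return-time pair `(k, l)` with `k - l = n`. -/
def DRSn (σ : X → X) (n : ℤ) : Set X :=
  {x | ∃ k l : ℕ, (k : ℤ) - l = n ∧ σ^[k] x = σ^[l] x}

lemma DRSn_key (σ : X → X) {x y : X} {k m : ℤ}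
    (h1 : (x, k, y) ∈ DR σ) (h2 : y ∈ DRSn σ m) : x ∈ DRSn σ m := by
  obtain ⟨a, b, hab, he⟩ := h1
  obtain ⟨c, d, hcd, hy⟩ := h2
  simp only at he
  refine ⟨c + a, d + a, by push_cast; omega, ?_⟩
  have key : σ^[c] (σ^[a] x) = σ^[d] (σ^[a] x) := by
    calc σ^[c] (σ^[a] x) = σ^[c] (σ^[b] y) := by rw [he]
    _ = σ^[b] (σ^[c] y) := by
        rw [← Function.iterate_add_apply, ← Function.iterate_add_apply, Nat.add_comm]
    _ = σ^[b] (σ^[d] y) := by rw [hy]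
    _ = σ^[d] (σ^[b] y) := by
        rw [← Function.iterate_add_apply, ← Function.iterate_add_apply, Nat.add_comm]
    _ = σ^[d] (σ^[a] x) := by rw [he]
  rw [Function.iterate_add_apply, Function.iterate_add_apply]
  exact key

lemma mem_DRBn {σ : X → X} {n : ℤ} {p : X × ℤ × X} :
    p ∈ DRBn σ n ↔ p.2.1 = n ∧ p.1 = p.2.2 ∧ p.1 ∈ DRSn σ n := by
  constructor
  · rintro ⟨⟨⟨a, b, hab, he⟩, hd⟩, hn⟩
    exact ⟨hn, hd, a, b, by omega, by rw [← hd] at he; exact he⟩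
  · rintro ⟨hn, hd, a, b, hab, he⟩
    exact ⟨⟨⟨a, b, by omega, by rw [← hd]; exact he⟩, hd⟩, hn⟩

lemma DRBn_eq (σ : X → X) (n : ℤ) :
    DRBn σ n = {p : X × ℤ × X | p.2.1 = n} ∩ {p | p.1 = p.2.2} ∩
      ((fun p : X × ℤ × X => p.1) ⁻¹' DRSn σ n) := by
  ext p
  simp only [Set.mem_inter_iff, Set.mem_setOf_eq, Set.mem_preimage, mem_DRBn]
  tauto

lemma DRmeasSet_eq {α : Type*} [MeasurableSpace α] [MeasurableSpace X]
    [StandardBorelSpace X] {f g : α → X} (hf : Measurable f) (hg : Measurable g) :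
    MeasurableSet {a | f a = g a} := by
  letI := upgradeStandardBorel X
  exact (hf.prodMk hg) isClosed_diagonal.measurableSet

lemma DRSn_measurable [MeasurableSpace X] [StandardBorelSpace X] {σ : X → X}
    (hσ : Measurable σ) (n : ℤ) : MeasurableSet (DRSn σ n) := by
  have : DRSn σ n = ⋃ (k : ℕ), ⋃ (l : ℕ), ⋃ (_ : (k : ℤ) - l = n),
      {x | σ^[k] x = σ^[l] x} := by
    ext x
    simp only [DRSn, Set.mem_setOf_eq, Set.mem_iUnion]
    tauto
  rw [this]
  refine MeasurableSet.iUnion fun k => MeasurableSet.iUnion fun l =>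
    MeasurableSet.iUnion fun _ => ?_
  exact DRmeasSet_eq (hσ.iterate k) (hσ.iterate l)

lemma DRBn_measurable [MeasurableSpace X] [StandardBorelSpace X] {σ : X → X}
    (hσ : Measurable σ) (n : ℤ) : MeasurableSet (DRBn σ n) := by
  rw [DRBn_eq]
  refine MeasurableSet.inter (MeasurableSet.inter ?_ ?_) ?_
  · exact (measurable_fst.comp measurable_snd) (MeasurableSet.singleton n)
  · exact DRmeasSet_eq measurable_fst (measurable_snd.comp measurable_snd)
  · exact measurable_fst (DRSn_measurable hσ n)

lemma DRBn_fiber_mem (σ : X → X) (n : ℤ) (y : X) (h : y ∈ DRSn σ n) :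
  DRBn σ n ∩ {p : X × ℤ × X | p.2.2 = y} = {(y, n, y)} := by
  ext p
  simp only [Set.mem_inter_iff, Set.mem_setOf_eq, Set.mem_singleton_iff, mem_DRBn]
  constructor
  · rintro ⟨⟨hn, hd, _⟩, hy⟩
    obtain ⟨p1, p2, p3⟩ := p
    simp_all
  · rintro rfl
    exact ⟨⟨rfl, rfl, h⟩, rfl⟩

lemma DRBn_fiber_notMem (σ : X → X) (n : ℤ) (y : X) (h : y ∉ DRSn σ n) :
  DRBn σ n ∩ {p : X × ℤ × X | p.2.2 = y} = ∅ := by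
  ext p
  simp only [Set.mem_inter_iff, Set.mem_setOf_eq, Set.mem_empty_iff_false,
    iff_false, not_and, mem_DRBn]
  rintro ⟨hn, hd, hS⟩ hy
  rw [hd, hy] at hS
  exact h hS

lemma DRmuS_DRBn [MeasurableSpace X] [StandardBorelSpace X] {σ : X → X}
    (hσ : Measurable σ) (μ : MeasureTheory.Measure X) (n : ℤ) :
    DRmuS μ (DRBn σ n) = μ (DRSn σ n) := by
  have hfun : ∀ y : X, ((DRBn σ n ∩ {p : X × ℤ × X | p.2.2 = y}).encard : ℝ≥0∞)
      = (DRSn σ n).indicator (fun _ => 1) y := by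
    intro y
    by_cases h : y ∈ DRSn σ n
    · rw [DRBn_fiber_mem σ n y h, Set.encard_singleton, Set.indicator_of_mem h]
      exact ENat.toENNReal_one
    · rw [DRBn_fiber_notMem σ n y h, Set.encard_empty, Set.indicator_of_notMem h]
      exact ENat.toENNReal_zero
  unfold DRmuS
  simp_rw [hfun]
  rw [MeasureTheory.lintegral_indicator (DRSn_measurable hσ n),
    MeasureTheory.setLIntegral_one]

end Aux

lemma mem_DR_diag {X : Type*} {σ : X → X} {x : X} {m : ℤ} :
    (x, m, x) ∈ DR σ ↔ x ∈ DRSn σ m := Iff.rfl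

lemma DRconj_bound {X : Type*} [MeasurableSpace X] (σ : X → X)
    (μ : Measure X) [IsProbabilityMeasure μ] (n : ℤ) :
    DRmuS μ (DRconjClass σ (DRBn σ n)) < ⊤ := by
  have hle : ∀ y : X,
      ((DRconjClass σ (DRBn σ n) ∩ {p : X × ℤ × X | p.2.2 = y}).encard : ℝ≥0∞) ≤ 1 := by
    intro y
    rw [← ENat.toENNReal_one, ENat.toENNReal_le]
    refine le_trans (Set.encard_le_encard (t := {((y : X), (n : ℤ), y)}) ?_) ?_
    · rintro p ⟨⟨q, hq, x, k, hDR, rfl⟩, hy⟩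
      have hqn := (mem_DRBn.mp hq).1
      simp only [Set.mem_setOf_eq] at hy
      subst hy
      simp [hqn]
    · rw [Set.encard_singleton]
  calc DRmuS μ (DRconjClass σ (DRBn σ n)) ≤ ∫⁻ _, 1 ∂μ := lintegral_mono fun y => hle y
  _ = 1 := by simp
  _ < ⊤ := ENNReal.one_lt_top

theorem stmt_18 {X : Type*} [MeasurableSpace X] [StandardBorelSpace X]
    (σ : X → X) (hσ : Measurable σ) (μ : Measure X) [IsProbabilityMeasure μ] :
    -- (a)
    (DRIso σ = {p : X × ℤ × X | p.1 = p.2.2 ∧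
        ∃ k l : ℕ, (k : ℤ) - l = p.2.1 ∧ σ^[k] p.1 = σ^[l] p.1}) ∧
    -- (b)
    (∀ (x y : X) (n m : ℤ), (x, n, y) ∈ DR σ → (y, m, y) ∈ DR σ →
      DRmul (DRmul (x, n, y) (y, m, y)) (y, -n, x) = (x, m, x) ∧
        (x, m, x) ∈ DR σ) ∧
    -- (c)
    (∀ n : ℤ, MeasurableSet (DRBn σ n) ∧
      Set.InjOn (fun p : X × ℤ × X => p.2.2) (DRBn σ n) ∧
      Set.InjOn (fun p : X × ℤ × X => p.1) (DRBn σ n) ∧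
      (∀ p ∈ DRBn σ n, ∀ (x : X) (k : ℤ), (x, k, p.1) ∈ DR σ →
        (x, p.2.1, x) ∈ DRBn σ n)) ∧
    -- (d)
    ((DRIcc σ μ ↔ ∀ n : ℤ, n ≠ 0 → DRmuS μ (DRBn σ n) = 0) ∧
      ((∀ n : ℤ, n ≠ 0 → DRmuS μ (DRBn σ n) = 0) ↔
        μ {x : X | ∃ k l : ℕ, k ≠ l ∧ σ^[k] x = σ^[l] x} = 0)) := by
  refine ⟨?_, ?_, ?_, ?_, ?_⟩
  · -- (a)
    ext p
    constructor
    · rintro ⟨⟨k, l, h1, h2⟩, hd⟩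
      exact ⟨hd, k, l, h1, by rw [← hd] at h2; exact h2⟩
    · rintro ⟨hd, k, l, h1, h2⟩
      exact ⟨⟨k, l, h1, by rw [← hd]; exact h2⟩, hd⟩
  · -- (b)
    intro x y n m h1 h2
    constructor
    · simp only [DRmul, Prod.mk.injEq]
      exact ⟨trivial, by omega, trivial⟩
    · exact mem_DR_diag.mpr (DRSn_key σ h1 (mem_DR_diag.mp h2))
  · -- (c)
    intro n
    refine ⟨DRBn_measurable hσ n, ?_, ?_, ?_⟩
    · rintro ⟨p1, p2, p3⟩ hp ⟨q1, q2, q3⟩ hq h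
      rw [mem_DRBn] at hp hq
      simp only at h hp hq ⊢
      obtain ⟨hp1, hp2, -⟩ := hp
      obtain ⟨hq1, hq2, -⟩ := hq
      simp_all
    · rintro ⟨p1, p2, p3⟩ hp ⟨q1, q2, q3⟩ hq h
      rw [mem_DRBn] at hp hq
      simp only at h hp hq ⊢
      obtain ⟨hp1, hp2, -⟩ := hp
      obtain ⟨hq1, hq2, -⟩ := hq
      simp_all
    · intro p hp x k hxk
      rw [mem_DRBn] at hp ⊢
      obtain ⟨h1, h2, h3⟩ := hp
      exact ⟨h1, rfl, DRSn_key σ hxk h3⟩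
  · -- (d1)
    constructor
    · intro hicc n hn
      by_contra hne
      have h2 := hicc (DRBn σ n) (fun p hp => hp.1) (DRBn_measurable hσ n) hne
        (DRconj_bound σ μ n)
      have h3 : {p ∈ DRBn σ n | p.2.1 ≠ 0} = DRBn σ n := by
        ext p
        simp only [Set.mem_setOf_eq, and_iff_left_iff_imp]
        intro hp
        rw [(mem_DRBn.mp hp).1]
        exact hn
      rw [h3] at h2
      exact hne h2
    · intro h0 B hB hBmeas _ _
      have hN : μ (⋃ (n : ℤ), ⋃ (_ : n ≠ 0), DRSn σ n) = 0 :=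
        measure_iUnion_null fun n => measure_iUnion_null fun hn => by
          rw [← DRmuS_DRBn hσ μ n]; exact h0 n hn
      have hae : (fun y => ((({p ∈ B | p.2.1 ≠ 0} : Set (X × ℤ × X)) ∩
          {p : X × ℤ × X | p.2.2 = y}).encard : ℝ≥0∞)) =ᵐ[μ] (fun _ => 0) := by
        rw [Filter.EventuallyEq, MeasureTheory.ae_iff]
        refine measure_mono_null ?_ hN
        intro y hy
        simp only [Set.mem_setOf_eq] at hy
        have hne : (({p ∈ B | p.2.1 ≠ 0} : Set (X × ℤ × X)) ∩
            {p : X × ℤ × X | p.2.2 = y}).Nonempty := by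
          rw [Set.nonempty_iff_ne_empty]
          intro he
          exact hy (by rw [he, Set.encard_empty]; exact ENat.toENNReal_zero)
        obtain ⟨p, ⟨hpB, hp0⟩, hpy⟩ := hne
        obtain ⟨hpDR, hpd⟩ := hB hpB
        simp only [Set.mem_setOf_eq] at hpy hpd hp0
        refine Set.mem_iUnion.mpr ⟨p.2.1, Set.mem_iUnion.mpr ⟨hp0, ?_⟩⟩
        obtain ⟨a, b, hab, he⟩ := hpDR
        rw [hpd, hpy] at he
        exact ⟨a, b, hab, he⟩
      show (∫⁻ y, ((({p ∈ B | p.2.1 ≠ 0} : Set (X × ℤ × X)) ∩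
          {p : X × ℤ × X | p.2.2 = y}).encard : ℝ≥0∞) ∂μ) = 0
      rw [lintegral_congr_ae hae, lintegral_zero]
  · -- (d2)
    constructor
    · intro h
      have hsub : {x : X | ∃ k l : ℕ, k ≠ l ∧ σ^[k] x = σ^[l] x} ⊆
          ⋃ (n : ℤ), ⋃ (_ : n ≠ 0), DRSn σ n := by
        rintro x ⟨k, l, hkl, he⟩
        exact Set.mem_iUnion.mpr ⟨(k : ℤ) - l,
          Set.mem_iUnion.mpr ⟨by omega, k, l, rfl, he⟩⟩
      refine measure_mono_null hsub
        (measure_iUnion_null fun n => measure_iUnion_null fun hn => ?_)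
      rw [← DRmuS_DRBn hσ μ n]
      exact h n hn
    · intro h n hn
      rw [DRmuS_DRBn hσ μ n]
      refine measure_mono_null ?_ h
      rintro x ⟨k, l, hkl, he⟩
      exact ⟨k, l, by omega, he⟩
end
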